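/- arXiv:1109.0215 — 6 statements merged into one kernel-verified Lean document; each statement's English description precedes it below -/
import Mathlib

section
/- Let P be a group of errors and 𝒞 an [[n,k,s,m]] morphism. There exists a positive integer η such that for every M ∈ M₁ and every (S₁, …, S_η) ∈ (Z^s)^η, the physical output π_η(M, I, S₁, …, I, S_η) (all information blocks being I^k) has weight at least 1. The smallest such η is called the speed of 𝒞. -/
open scoped BigOperators

namespace Turbo

variable {P : Type} [Group P]

/-- Weight of an error: the number of non-identity coordinates. -/
noncomputable def wt {n : ℕ} (E : Fin n → P) : ℕ := {i | E i ≠ 1}.ncard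

/-- Pad a finite sequence of blocks to an infinite one by identity blocks. -/
def pad {β : Type} [One β] {N : ℕ} (x : Fin N → β) : ℕ → β :=
  fun i => if h : i < N then x ⟨i, h⟩ else 1

/-- All blocks of a stabilizer sequence have coordinates in `Z`. -/
def ZValued (Z : Subgroup P) {s : ℕ} (S : ℕ → Fin s → P) : Prop := ∀ i j, S i j ∈ Z

/-- Intermediate memory error `M_i` of a convolutional morphism built from the seed `F`. -/
def convMem {m k s n : ℕ}
    (F : ((Fin m → P) × (Fin k → P) × (Fin s → P)) → ((Fin n → P) × (Fin m → P)))
    (M : Fin m → P) (L : ℕ → Fin k → P) (S : ℕ → Fin s → P) : ℕ → Fin m → P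
  | 0 => M
  | i + 1 => (F (convMem F M L S i, L i, S i)).2

/-- The `i`-th physical output block `P_{i+1}` of the convolutional morphism. -/
def convOut {m k s n : ℕ}
    (F : ((Fin m → P) × (Fin k → P) × (Fin s → P)) → ((Fin n → P) × (Fin m → P)))
    (M : Fin m → P) (L : ℕ → Fin k → P) (S : ℕ → Fin s → P) (i : ℕ) : Fin n → P :=
  (F (convMem F M L S i, L i, S i)).1

/-- Weight of the physical output `π_N` (first `N` physical blocks). -/
noncomputable def outWt {m k s n : ℕ}
    (F : ((Fin m → P) × (Fin k → P) × (Fin s → P)) → ((Fin n → P) × (Fin m → P)))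
    (M : Fin m → P) (L : ℕ → Fin k → P) (S : ℕ → Fin s → P) (N : ℕ) : ℕ :=
  ∑ i ∈ Finset.range N, wt (convOut F M L S i)

/-- Weight of the full output `𝒞_N(E) = (P_1, …, P_N, M_N)`. -/
noncomputable def fullWt {m k s n : ℕ}
    (F : ((Fin m → P) × (Fin k → P) × (Fin s → P)) → ((Fin n → P) × (Fin m → P)))
    (M : Fin m → P) (L : ℕ → Fin k → P) (S : ℕ → Fin s → P) (N : ℕ) : ℕ :=
  outWt F M L S N + wt (convMem F M L S N)

/-- The output `𝒞_∞(E)` of the infinite convolutional morphism has infinite weight. -/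
def InfOutput {m k s n : ℕ}
    (F : ((Fin m → P) × (Fin k → P) × (Fin s → P)) → ((Fin n → P) × (Fin m → P)))
    (M : Fin m → P) (L : ℕ → Fin k → P) (S : ℕ → Fin s → P) : Prop :=
  {i : ℕ | convOut F M L S i ≠ 1}.Infinite

/-- The information part of an infinite input has exactly one non-identity letter. -/
def OneInfoLetter {k : ℕ} (L : ℕ → Fin k → P) : Prop :=
  ∃! p : ℕ × Fin k, L p.1 p.2 ≠ 1

/-- A recursive `[[n,k,s,m]]` morphism. -/
def Recursive {m k s n : ℕ} (Z : Subgroup P)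
    (F : ((Fin m → P) × (Fin k → P) × (Fin s → P)) → ((Fin n → P) × (Fin m → P))) : Prop :=
  ∀ (L : ℕ → Fin k → P) (S : ℕ → Fin s → P),
    OneInfoLetter L → ZValued Z S → InfOutput F 1 L S

/-- A systematic morphism: the output weight dominates the information weight. -/
def Systematic {m k s n : ℕ}
    (F : ((Fin m → P) × (Fin k → P) × (Fin s → P)) → ((Fin n → P) × (Fin m → P))) : Prop :=
  ∀ (N : ℕ) (M : Fin m → P) (L : ℕ → Fin k → P) (S : ℕ → Fin s → P),
    (∑ i ∈ Finset.range N, wt (L i)) ≤ fullWt F M L S N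

/-- The set `M₁` of memory errors giving an infinite output on trivial information input. -/
def M1 {m k s n : ℕ} (Z : Subgroup P)
    (F : ((Fin m → P) × (Fin k → P) × (Fin s → P)) → ((Fin n → P) × (Fin m → P))) :
    Set (Fin m → P) :=
  {M | ∀ S : ℕ → Fin s → P, ZValued Z S → InfOutput F M 1 S}

/-- The set of candidate speeds of a morphism. -/
def speedSet {m k s n : ℕ} (Z : Subgroup P)
    (F : ((Fin m → P) × (Fin k → P) × (Fin s → P)) → ((Fin n → P) × (Fin m → P))) : Set ℕ :=
  {η | 0 < η ∧ ∀ M ∈ M1 Z F, ∀ S : ℕ → Fin s → P, ZValued Z S → 1 ≤ outWt F M 1 S η}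

/-- `η` is the speed of the morphism `F`. -/
def IsSpeed {m k s n : ℕ} (Z : Subgroup P)
    (F : ((Fin m → P) × (Fin k → P) × (Fin s → P)) → ((Fin n → P) × (Fin m → P)))
    (η : ℕ) : Prop :=
  IsLeast (speedSet Z F) η

/-- The set `𝕀` of memory errors accessible from the identity memory with trivial
information and `Z`-valued stabilizers. -/
def Iset {m k s n : ℕ} (Z : Subgroup P)
    (F : ((Fin m → P) × (Fin k → P) × (Fin s → P)) → ((Fin n → P) × (Fin m → P))) :
    Set (Fin m → P) :=
  {M | ∃ (N : ℕ) (S : ℕ → Fin s → P), ZValued Z S ∧ M = convMem F 1 1 S N}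

/- ### Block `[[n,k]]` encoders -/

/-- `E` is undetected for the `[[n,k]]` encoder `C`. -/
def Undetected {k n : ℕ} (Z : Subgroup P)
    (C : ((Fin k → P) × (Fin (n - k) → P)) ≃* (Fin n → P)) (E : Fin n → P) : Prop :=
  E ≠ 1 ∧ ∀ j, (C.symm E).2 j ∈ Z

/-- `E` is harmful for the `[[n,k]]` encoder `C`. -/
def Harmful {k n : ℕ} (Z : Subgroup P)
    (C : ((Fin k → P) × (Fin (n - k) → P)) ≃* (Fin n → P)) (E : Fin n → P) : Prop :=
  Undetected Z C E ∧ (C.symm E).1 ≠ 1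

/-- The distance `d_c` of an `[[n,k]]` encoder. -/
noncomputable def encDist {k n : ℕ} (Z : Subgroup P)
    (C : ((Fin k → P) × (Fin (n - k) → P)) ≃* (Fin n → P)) : ℕ :=
  sInf {w | ∃ E, Harmful Z C E ∧ wt E = w}

/-- The degenerate distance `d_q` of an `[[n,k]]` encoder. -/
noncomputable def encDegenDist {k n : ℕ} (Z : Subgroup P)
    (C : ((Fin k → P) × (Fin (n - k) → P)) ≃* (Fin n → P)) : ℕ :=
  sInf {w | ∃ E, Undetected Z C E ∧ wt E = w}

/-- Weight distribution `a^{⊗N}(d)` of the blockwise encoder `C^{⊗N}`. -/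
noncomputable def aTensor {k n : ℕ} (Z : Subgroup P)
    (C : ((Fin k → P) × (Fin (n - k) → P)) ≃* (Fin n → P)) (N d : ℕ) : ℕ :=
  Set.ncard {E : (Fin N → Fin k → P) × (Fin N → Fin (n - k) → P) |
    (∀ i j, E.2 i j ∈ Z) ∧ E.1 ≠ 1 ∧ (∑ i, wt (C (E.1 i, E.2 i))) = d}

/- ### `[[n,k,m]]` encoders and their truncated decoders -/

/-- The truncated decoder `C̄` of an `[[n,k,m]]` encoder `C`, as a `[[k,n,0,m]]` morphism. -/
def truncDecoder {m k n : ℕ}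
    (C : ((Fin m → P) × (Fin k → P) × (Fin (n - k) → P)) ≃* ((Fin n → P) × (Fin m → P))) :
    ((Fin m → P) × (Fin n → P) × (Fin 0 → P)) → ((Fin k → P) × (Fin m → P)) :=
  fun x => ((C.symm (x.2.1, x.1)).2.1, (C.symm (x.2.1, x.1)).1)

/-- Weight distribution `a_N(w, d)` of a convolutional morphism. -/
noncomputable def aN {m k s n : ℕ} (Z : Subgroup P)
    (F : ((Fin m → P) × (Fin k → P) × (Fin s → P)) → ((Fin n → P) × (Fin m → P)))
    (N w d : ℕ) : ℕ :=
  Set.ncard {ML : (Fin m → P) × (Fin N → Fin k → P) |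
    (wt ML.1 + ∑ i, wt (ML.2 i)) = w ∧
    ∃ S : Fin N → Fin s → P, (∀ i j, S i j ∈ Z) ∧
      fullWt F ML.1 (pad ML.2) (pad S) N = d}

/-- Weight distribution `a_N(w, ≤ d)` of a convolutional morphism. -/
noncomputable def aNle {m k s n : ℕ} (Z : Subgroup P)
    (F : ((Fin m → P) × (Fin k → P) × (Fin s → P)) → ((Fin n → P) × (Fin m → P)))
    (N w : ℕ) (d : ℝ) : ℕ :=
  Set.ncard {ML : (Fin m → P) × (Fin N → Fin k → P) |
    (wt ML.1 + ∑ i, wt (ML.2 i)) = w ∧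
    ∃ S : Fin N → Fin s → P, (∀ i j, S i j ∈ Z) ∧
      (fullWt F ML.1 (pad ML.2) (pad S) N : ℝ) ≤ d}

/- ### Traces and detours -/

/-- Replace every information letter at (1-indexed flattened) position `> p` by the identity. -/
def truncAfter {k : ℕ} (L : ℕ → Fin k → P) (p : ℕ) : ℕ → Fin k → P :=
  fun i j => if i * k + (j : ℕ) + 1 ≤ p then L i j else 1

/-- `q` is the (1-indexed flattened) position of a non-identity information letter of the
first `N` information blocks. -/
def IsInfoPos {k : ℕ} (N : ℕ) (L : ℕ → Fin k → P) (q : ℕ) : Prop :=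
  ∃ (i : ℕ) (j : Fin k), i < N ∧ q = i * k + (j : ℕ) + 1 ∧ L i j ≠ 1

/-- The information part of the `i`-th truncature `E_{∖i}`. -/
def truncInfo {k : ℕ} (L : ℕ → Fin k → P) (p : ℕ → ℕ) : ℕ → (ℕ → Fin k → P)
  | 0 => 1
  | i + 1 => truncAfter L (p i)

/-- The number `N_i` of blocks making up the `i`-th truncature (with `N_0 = 0`):
the block containing the position `p i`. -/
def cutOf (k : ℕ) (p : ℕ → ℕ) : ℕ → ℕ
  | 0 => 0
  | i + 1 => (p i - 1) / k + 1

/-- Extend a stabilizer sequence: the first `cut` blocks come from `S`, the rest from `St`. -/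
def extendS {s : ℕ} (S : ℕ → Fin s → P) (cut : ℕ) (St : ℕ → Fin s → P) : ℕ → Fin s → P :=
  fun j => if j < cut then S j else St (j - cut)

/-- The intermediate memory error `M_i` attached to the `i`-th truncature `E_{∖i}`. -/
def traceMem {m k s n : ℕ}
    (F : ((Fin m → P) × (Fin k → P) × (Fin s → P)) → ((Fin n → P) × (Fin m → P)))
    (M : Fin m → P) (L : ℕ → Fin k → P) (S : ℕ → Fin s → P) (p : ℕ → ℕ) : ℕ → Fin m → P
  | 0 => M
  | i + 1 => convMem F M (truncAfter L (p i)) S ((p i - 1) / k + 1)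

/-- Paper-indexed positions: `pp p 0 = 0` and `pp p j = p (j-1)` for `j ≥ 1`. -/
def pp (p : ℕ → ℕ) : ℕ → ℕ
  | 0 => 0
  | j + 1 => p j

/-- The segment `[a, c)` of the trace `b` is a terminating detour: a nonempty run of `1`'s
followed by a single final `0`. -/
def IsTermDetour (b : ℕ → Prop) (a c : ℕ) : Prop :=
  a + 1 < c ∧ (∀ t, a ≤ t → t + 1 < c → b t) ∧ ¬ b (c - 1)

/-- The segment `[a, c)` of the trace `b` is a detour: a nonempty run of `1`'s, possibly
completed with a single final `0`. -/
def IsDetour (b : ℕ → Prop) (a c : ℕ) : Prop :=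
  (a < c ∧ ∀ t, a ≤ t → t < c → b t) ∨ IsTermDetour b a c

end Turbo

namespace TurboAux
open Turbo

lemma wt_eq_zero_iff {P : Type} [Group P] {n : ℕ} (E : Fin n → P) : wt E = 0 ↔ E = 1 := by
  unfold wt
  rw [Set.ncard_eq_zero (Set.toFinite _), Set.eq_empty_iff_forall_notMem]
  constructor
  · intro h; funext i
    have := h i
    simp only [Set.mem_setOf_eq, not_not] at this
    simpa using this
  · intro h i
    simp [h]

lemma succ_mod (t c : ℕ) : (t + 1) % c = (t % c + 1) % c := by
  conv_lhs => rw [← Nat.div_add_mod t c, add_assoc, Nat.mul_add_mod]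

end TurboAux

open Turbo TurboAux in
/-- There exists a positive integer `η` (the speed) such that every `M ∈ M₁` together with
`Z`-valued stabilizers produces a physical output of weight at least `1` after `η` steps. -/
theorem speed_exists {P : Type} [Group P] [Finite P] (Z : Subgroup P) (hZ : Z ≠ ⊤)
    {m k s n : ℕ}
    (𝒞 : ((Fin m → P) × (Fin k → P) × (Fin s → P)) →* ((Fin n → P) × (Fin m → P))) :
    ∃ η : ℕ, 0 < η ∧ ∀ M ∈ M1 Z ⇑𝒞, ∀ S : ℕ → Fin s → P, ZValued Z S →
      1 ≤ outWt ⇑𝒞 M 1 S η := by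
  classical
  set η := Nat.card (Fin m → P) + 1 with hη
  refine ⟨η, Nat.succ_pos _, ?_⟩
  intro M hM S hS
  by_contra hout
  push_neg at hout
  have hout0 : outWt ⇑𝒞 M 1 S η = 0 := Nat.lt_one_iff.mp hout
  have hzero : ∀ i < η, convOut ⇑𝒞 M 1 S i = 1 := by
    intro i hi
    rw [outWt, Finset.sum_eq_zero_iff] at hout0
    exact (wt_eq_zero_iff _).mp (hout0 i (Finset.mem_range.mpr hi))
  -- pigeonhole on the memory states
  letI : Fintype P := Fintype.ofFinite P
  obtain ⟨x, y, hxy, hmapeq⟩ :=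
    Fintype.exists_ne_map_eq_of_card_lt
      (fun i : Fin (η + 1) => convMem ⇑𝒞 M 1 S (i : ℕ))
      (by simp only [hη, Nat.card_eq_fintype_card, Fintype.card_fin]; omega)
  -- get a < b ≤ η with equal memories
  obtain ⟨a, b, hab, hbη, heq⟩ :
      ∃ a b : ℕ, a < b ∧ b ≤ η ∧ convMem ⇑𝒞 M 1 S a = convMem ⇑𝒞 M 1 S b := by
    rcases lt_or_gt_of_ne hxy with h | h
    · exact ⟨x, y, h, Nat.lt_succ_iff.mp y.isLt, hmapeq⟩
    · exact ⟨y, x, h, Nat.lt_succ_iff.mp x.isLt, hmapeq.symm⟩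
  set c := b - a with hc
  have hc0 : 0 < c := by omega
  -- loop the stabilizers
  set S' : ℕ → Fin s → P := fun j => if j < a then S j else S (a + (j - a) % c) with hS'def
  have hS' : ZValued Z S' := by
    intro i j
    simp only [hS'def]
    split <;> exact hS _ _
  have memA : ∀ i ≤ a, convMem ⇑𝒞 M 1 S' i = convMem ⇑𝒞 M 1 S i := by
    intro i hi
    induction i with
    | zero => rfl
    | succ i ih =>
      have h1 : i < a := by omega
      have hSi : S' i = S i := by simp [hS'def, h1]
      simp only [convMem, ih (le_of_lt h1), hSi]
  have key : ∀ t, convMem ⇑𝒞 M 1 S' (a + t) = convMem ⇑𝒞 M 1 S (a + t % c) := by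
    intro t
    induction t with
    | zero => simpa [Nat.zero_mod] using memA a le_rfl
    | succ t ih =>
      have hSt : S' (a + t) = S (a + t % c) := by
        have h1 : ¬ a + t < a := by omega
        simp [hS'def, h1]
      have hstep : convMem ⇑𝒞 M 1 S' (a + (t + 1)) = convMem ⇑𝒞 M 1 S (a + t % c + 1) := by
        have : a + (t + 1) = (a + t) + 1 := by omega
        rw [this]
        simp only [convMem, ih, hSt, Pi.one_apply]
      have hlt : t % c < c := Nat.mod_lt _ hc0
      rcases eq_or_lt_of_le (Nat.succ_le_of_lt hlt) with hcase | hcase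
      · have hmod : (t + 1) % c = 0 := by rw [succ_mod, show t % c + 1 = c from hcase, Nat.mod_self]
        have hb : a + t % c + 1 = b := by omega
        rw [hstep, hb, hmod, ← heq]
        simp
      · have hmod : (t + 1) % c = t % c + 1 := by
          rw [succ_mod, Nat.mod_eq_of_lt hcase]
        rw [hstep, hmod, ← add_assoc]
  have allone : ∀ i, convOut ⇑𝒞 M 1 S' i = 1 := by
    intro i
    rcases lt_or_ge i a with hi | hi
    · have hSi : S' i = S i := by simp [hS'def, hi]
      have := hzero i (by omega)
      rw [convOut, memA i (le_of_lt hi), hSi]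
      exact this
    · obtain ⟨t, rfl⟩ : ∃ t, i = a + t := ⟨i - a, by omega⟩
      have hSt : S' (a + t) = S (a + t % c) := by
        have h1 : ¬ a + t < a := by omega
        simp [hS'def, h1]
      have hlt : a + t % c < η := by
        have := Nat.mod_lt t hc0
        omega
      have := hzero (a + t % c) hlt
      rw [convOut, key t, hSt]
      exact this
  have hinf := hM S' hS'
  obtain ⟨i, hi⟩ := hinf.nonempty
  exact hi (allone i)
end

section
/- Let P be a group of errors and 𝒞 an [[n,k,s,m]] morphism. For every N > 0 and every (S₁, …, S_N) ∈ (Z^s)^N, the map from P^m to P^m sending M to μ_N(M, I, S₁, …, I, S_N) (all information blocks being I^k) maps the set M₁ into itself. -/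
open scoped BigOperators

open Turbo in
lemma convMem_congr' {P : Type} [Group P] {m k s n : ℕ}
    (F : ((Fin m → P) × (Fin k → P) × (Fin s → P)) → ((Fin n → P) × (Fin m → P)))
    (M : Fin m → P) (L : ℕ → Fin k → P) {S S' : ℕ → Fin s → P} (i : ℕ)
    (h : ∀ j, j < i → S j = S' j) :
    convMem F M L S i = convMem F M L S' i := by
  induction i with
  | zero => rfl
  | succ i ih =>
    simp only [convMem, ih (fun j hj => h j (Nat.lt_succ_of_lt hj)),
      h i (Nat.lt_succ_self i)]

open Turbo in
lemma convMem_add' {P : Type} [Group P] {m k s n : ℕ}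
    (F : ((Fin m → P) × (Fin k → P) × (Fin s → P)) → ((Fin n → P) × (Fin m → P)))
    (M : Fin m → P) (S : ℕ → Fin s → P) (N i : ℕ) :
    convMem F M 1 S (N + i)
      = convMem F (convMem F M 1 S N) 1 (fun j => S (N + j)) i := by
  induction i with
  | zero => rfl
  | succ i ih =>
    rw [Nat.add_succ]
    show (F (convMem F M 1 S (N + i), _, _)).2 = _
    rw [ih]
    rfl

open Turbo in
lemma convOut_add' {P : Type} [Group P] {m k s n : ℕ}
    (F : ((Fin m → P) × (Fin k → P) × (Fin s → P)) → ((Fin n → P) × (Fin m → P)))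
    (M : Fin m → P) (S : ℕ → Fin s → P) (N i : ℕ) :
    convOut F M 1 S (N + i)
      = convOut F (convMem F M 1 S N) 1 (fun j => S (N + j)) i := by
  unfold convOut
  rw [convMem_add']
  rfl

open Turbo in
/-- For `N > 0` and `Z`-valued stabilizer blocks, `M ↦ μ_N(M, I, S₁, …, I, S_N)` maps
the set `M₁` into itself. -/
theorem M1_stable {P : Type} [Group P] [Finite P] (Z : Subgroup P) (hZ : Z ≠ ⊤)
    {m k s n : ℕ}
    (𝒞 : ((Fin m → P) × (Fin k → P) × (Fin s → P)) →* ((Fin n → P) × (Fin m → P)))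
    (N : ℕ) (hN : 0 < N) (S : ℕ → Fin s → P) (hS : ZValued Z S)
    (M : Fin m → P) (hM : M ∈ M1 Z ⇑𝒞) :
    convMem ⇑𝒞 M 1 S N ∈ M1 Z ⇑𝒞 := by
  intro S' hS'
  set S'' : ℕ → Fin s → P := fun j => if j < N then S j else S' (j - N) with hS''def
  have hZS'' : ZValued Z S'' := by
    intro i j
    simp only [hS''def]
    split
    · exact hS i j
    · exact hS' _ j
  have hinf := hM S'' hZS''
  have hmem : convMem ⇑𝒞 M 1 S'' N = convMem ⇑𝒞 M 1 S N :=
    convMem_congr' _ _ _ N (fun j hj => by simp [hS''def, hj])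
  have hshift : ∀ i, convOut ⇑𝒞 M 1 S'' (N + i)
      = convOut ⇑𝒞 (convMem ⇑𝒞 M 1 S N) 1 S' i := by
    intro i
    rw [convOut_add', hmem]
    congr 1
    funext j
    simp [hS''def]
  have hsub : {i | convOut ⇑𝒞 M 1 S'' i ≠ 1}
      ⊆ Set.Iio N ∪ (fun i => N + i) ''
        {i | convOut ⇑𝒞 (convMem ⇑𝒞 M 1 S N) 1 S' i ≠ 1} := by
    intro i hi
    by_cases h : i < N
    · exact Or.inl h
    · refine Or.inr ⟨i - N, ?_, show N + (i - N) = i by omega⟩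
      have hiN : N + (i - N) = i := by omega
      rw [Set.mem_setOf_eq, ← hshift, hiN]
      exact hi
  by_contra hT
  rw [InfOutput, Set.not_infinite] at hT
  exact (hinf.mono hsub) ((Set.finite_Iio N).union (hT.image _))
end

section
/- Let P be a group of errors and 𝒞 an [[n,k,s,m]] morphism with speed η. For every N > 0, every M ∈ M₁, and every (S₁, …, S_N) ∈ (Z^s)^N, the physical output π_N(M, I, S₁, …, I, S_N) (all information blocks being I^k) has weight at least ⌊N/η⌋. -/
open scoped BigOperators

namespace Turbo

variable {P : Type} [Group P]

section Aux

variable {m k s n : ℕ}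
variable (F : ((Fin m → P) × (Fin k → P) × (Fin s → P)) → ((Fin n → P) × (Fin m → P)))

lemma convMem_shift1 (M : Fin m → P) (S : ℕ → Fin s → P) (t : ℕ) (i : ℕ) :
    convMem F (convMem F M 1 S t) 1 (fun j => S (t + j)) i = convMem F M 1 S (t + i) := by
  induction i with
  | zero => rfl
  | succ i ih =>
    show (F (_, _, _)).2 = (F (convMem F M 1 S (t + i), (1 : ℕ → Fin k → P) (t + i),
      S (t + i))).2
    rw [ih]
    simp

lemma convOut_shift1 (M : Fin m → P) (S : ℕ → Fin s → P) (t : ℕ) (i : ℕ) :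
    convOut F (convMem F M 1 S t) 1 (fun j => S (t + j)) i = convOut F M 1 S (t + i) := by
  show (F (_, _, _)).1 = (F (convMem F M 1 S (t + i), (1 : ℕ → Fin k → P) (t + i),
    S (t + i))).1
  rw [convMem_shift1]
  simp

lemma convMem_congrS (M : Fin m → P) (S S' : ℕ → Fin s → P) :
    ∀ i, (∀ j, j < i → S j = S' j) → convMem F M 1 S i = convMem F M 1 S' i := by
  intro i
  induction i with
  | zero => intro _; rfl
  | succ i ih =>
    intro h
    show (F (convMem F M 1 S i, _, S i)).2 = (F (convMem F M 1 S' i, _, S' i)).2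
    rw [ih (fun j hj => h j (hj.trans (Nat.lt_succ_self i))), h i (Nat.lt_succ_self i)]

lemma mem_M1_convMem (Z : Subgroup P) (M : Fin m → P) (hM : M ∈ M1 Z F)
    (S : ℕ → Fin s → P) (hS : ZValued Z S) (t : ℕ) :
    convMem F M 1 S t ∈ M1 Z F := by
  intro S' hS'
  set S'' : ℕ → Fin s → P := fun j => if j < t then S j else S' (j - t) with hS''def
  have hZ'' : ZValued Z S'' := by
    intro i j
    simp only [hS''def]
    split
    · exact hS i j
    · exact hS' _ j
  have hA : {i : ℕ | convOut F M 1 S'' i ≠ 1}.Infinite := hM S'' hZ''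
  have hmem : convMem F M 1 S'' t = convMem F M 1 S t := by
    apply convMem_congrS
    intro j hj
    simp [hS''def, hj]
  have hSeq : (fun j => S'' (t + j)) = S' := by
    funext j
    show (if t + j < t then S (t + j) else S' (t + j - t)) = S' j
    rw [if_neg (by omega), Nat.add_sub_cancel_left]
  have key : ∀ i, convOut F (convMem F M 1 S t) 1 S' i = convOut F M 1 S'' (t + i) := by
    intro i
    rw [← hmem, ← hSeq, convOut_shift1]
  set A := {i : ℕ | convOut F M 1 S'' i ≠ 1}
  have h1 : (A \ Set.Iio t).Infinite := hA.diff (Set.finite_Iio t)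
  have h2 : A \ Set.Iio t ⊆ (fun i => t + i) '' {i : ℕ | convOut F (convMem F M 1 S t) 1 S' i ≠ 1} := by
    rintro a ⟨ha, hlt⟩
    simp only [Set.mem_Iio, not_lt] at hlt
    refine ⟨a - t, ?_, show t + (a - t) = a by omega⟩
    show convOut F (convMem F M 1 S t) 1 S' (a - t) ≠ 1
    rw [key]
    have : t + (a - t) = a := by omega
    rw [this]
    exact ha
  exact Set.Infinite.of_image _ (h1.mono h2)

end Aux

end Turbo
open Turbo in
/-- If `η` is the speed of `𝒞`, then for `M ∈ M₁` and `Z`-valued stabilizers the physical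
output after `N` steps has weight at least `⌊N/η⌋`. -/
theorem speed_lower_bound {P : Type} [Group P] [Finite P] (Z : Subgroup P) (hZ : Z ≠ ⊤)
    {m k s n : ℕ}
    (𝒞 : ((Fin m → P) × (Fin k → P) × (Fin s → P)) →* ((Fin n → P) × (Fin m → P)))
    (η : ℕ) (hη : IsSpeed Z ⇑𝒞 η)
    (N : ℕ) (hN : 0 < N) (M : Fin m → P) (hM : M ∈ M1 Z ⇑𝒞)
    (S : ℕ → Fin s → P) (hS : ZValued Z S) :
    N / η ≤ outWt ⇑𝒞 M 1 S N := by
  obtain ⟨⟨hηpos, hkey⟩, -⟩ := hη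
  have step : ∀ q : ℕ, q ≤ ∑ i ∈ Finset.range (q * η), wt (convOut ⇑𝒞 M 1 S i) := by
    intro q
    induction q with
    | zero => simp
    | succ q ih =>
      rw [Nat.succ_mul, Finset.sum_range_add]
      have hMq : convMem ⇑𝒞 M 1 S (q * η) ∈ M1 Z ⇑𝒞 :=
        mem_M1_convMem ⇑𝒞 Z M hM S hS (q * η)
      have h1 := hkey _ hMq (fun j => S (q * η + j)) (fun i j => hS _ _)
      have h2 : outWt ⇑𝒞 (convMem ⇑𝒞 M 1 S (q * η)) 1 (fun j => S (q * η + j)) η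
          = ∑ i ∈ Finset.range η, wt (convOut ⇑𝒞 M 1 S (q * η + i)) := by
        unfold outWt
        refine Finset.sum_congr rfl fun i _ => ?_
        rw [convOut_shift1]
      rw [h2] at h1
      omega
  calc N / η ≤ ∑ i ∈ Finset.range (N / η * η), wt (convOut ⇑𝒞 M 1 S i) := step _
    _ ≤ ∑ i ∈ Finset.range N, wt (convOut ⇑𝒞 M 1 S i) :=
        Finset.sum_le_sum_of_subset (Finset.range_subset_range.mpr (Nat.div_mul_le_self N η))
    _ = outWt ⇑𝒞 M 1 S N := rfl
end

section
/- Let P be a group of errors and 𝒞 an [[n,k,s,m]] morphism. Then 𝒞 is recursive if and only if for every M ∈ 𝕀, every L ∈ P^k of weight 1, and every S ∈ Z^s, the memory component μ(M, L, S) of 𝒞(M, L, S) belongs to M₁. -/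
open scoped BigOperators

/-! An input whose only information letter sits in block `N` runs exactly like the
information-free input up to block `N`, so its memory there lies in `𝕀`; after block `N` the
information is trivial again, so by restarting the run at block `N + 1` the output is infinite
iff the memory reached there lies in `M₁`. -/

namespace Turbo

lemma infinite_setOf_add_iff {Q : ℕ → Prop} (a : ℕ) :
    {i | Q (a + i)}.Infinite ↔ {i | Q i}.Infinite := by
  have himage : (a + ·) '' {i | Q (a + i)} = {i | Q i} \ Set.Iio a := by
    ext i
    simp only [Set.mem_image, Set.mem_ofPred_eq, Set.mem_sdiff, Set.mem_Iio, not_lt]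
    constructor
    · rintro ⟨j, hj, rfl⟩
      exact ⟨hj, by omega⟩
    · rintro ⟨hi, hai⟩
      exact ⟨i - a, by rwa [Nat.add_sub_cancel' hai], Nat.add_sub_cancel' hai⟩
  rw [← Set.infinite_image_iff (add_right_injective a).injOn, himage]
  exact ⟨fun h => h.mono Set.sdiff_subset, fun h => h.sdiff (Set.finite_Iio a)⟩

variable {P : Type} {m k s n : ℕ}
  (F : ((Fin m → P) × (Fin k → P) × (Fin s → P)) → ((Fin n → P) × (Fin m → P)))

lemma convMem_congr (M : Fin m → P) {L L' : ℕ → Fin k → P} {S S' : ℕ → Fin s → P} :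
    ∀ i, (∀ j < i, L j = L' j) → (∀ j < i, S j = S' j) →
      convMem F M L S i = convMem F M L' S' i
  | 0, _, _ => rfl
  | i + 1, hL, hS => by
      simp only [convMem]
      rw [convMem_congr M i (fun j hj => hL j (by omega)) (fun j hj => hS j (by omega)),
        hL i (by omega), hS i (by omega)]

lemma convMem_add (M : Fin m → P) (L : ℕ → Fin k → P) (S : ℕ → Fin s → P) (a : ℕ) :
    ∀ i, convMem F M L S (a + i) =
      convMem F (convMem F M L S a) (fun j => L (a + j)) (fun j => S (a + j)) i
  | 0 => rfl
  | i + 1 => by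
      rw [← Nat.add_assoc]
      simp only [convMem]
      rw [convMem_add M L S a i]

lemma convOut_add (M : Fin m → P) (L : ℕ → Fin k → P) (S : ℕ → Fin s → P) (a i : ℕ) :
    convOut F M L S (a + i) =
      convOut F (convMem F M L S a) (fun j => L (a + j)) (fun j => S (a + j)) i := by
  simp only [convOut, convMem_add F M L S a i]

variable [Group P]

lemma infOutput_iff_restart (M : Fin m → P) (L : ℕ → Fin k → P) (S : ℕ → Fin s → P)
    (a : ℕ) : InfOutput F M L S ↔
      InfOutput F (convMem F M L S a) (fun j => L (a + j)) (fun j => S (a + j)) := by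
  simp only [InfOutput, ← convOut_add]
  exact (infinite_setOf_add_iff (Q := fun i => convOut F M L S i ≠ 1) a).symm

lemma infOutput_mulSingle_iff (M : Fin m → P) (N : ℕ) (L : Fin k → P) (S : ℕ → Fin s → P) :
    InfOutput F M (Pi.mulSingle N L) S ↔
      InfOutput F (F (convMem F M 1 S N, L, S N)).2 1 (fun j => S (N + 1 + j)) := by
  have hbefore : convMem F M (Pi.mulSingle N L) S N = convMem F M 1 S N :=
    convMem_congr F M N (fun j hj => by rw [Pi.mulSingle_eq_of_ne hj.ne]; rfl) (fun _ _ => rfl)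
  have hafter : (fun j => (Pi.mulSingle N L : ℕ → Fin k → P) (N + 1 + j)) = 1 :=
    funext fun j => by simp [show N + 1 + j ≠ N by omega]
  rw [infOutput_iff_restart F M _ S (N + 1), hafter]
  simp only [convMem, hbefore, Pi.mulSingle_eq_same]

lemma wt_eq_one_iff {E : Fin n → P} : wt E = 1 ↔ ∃! j, E j ≠ 1 := by
  simp only [wt, Set.ncard_eq_one, Set.eq_singleton_iff_unique_mem, Set.mem_ofPred_eq]
  rfl

lemma oneInfoLetter_mulSingle (N : ℕ) {L : Fin k → P} (hL : wt L = 1) :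
    OneInfoLetter (Pi.mulSingle N L) := by
  obtain ⟨j, hj, huniq⟩ := wt_eq_one_iff.mp hL
  refine ⟨(N, j), by simpa using hj, fun ⟨i, j'⟩ hij => ?_⟩
  obtain rfl : i = N := by
    by_contra hi
    exact hij (by simp [Pi.mulSingle_eq_of_ne hi])
  simp only [Pi.mulSingle_eq_same] at hij
  rw [huniq j' hij]

lemma OneInfoLetter.exists_eq_mulSingle {L : ℕ → Fin k → P} (h : OneInfoLetter L) :
    ∃ N, L = Pi.mulSingle N (L N) ∧ wt (L N) = 1 := by
  obtain ⟨⟨N, j⟩, hj, huniq⟩ := h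
  have hblock : ∀ i j', L i j' ≠ 1 → i = N ∧ j' = j := fun i j' h =>
    Prod.ext_iff.mp (huniq (i, j') h)
  refine ⟨N, funext fun i => ?_, wt_eq_one_iff.mpr ⟨j, hj, fun j' h => (hblock N j' h).2⟩⟩
  by_cases hi : i = N
  · subst hi
    simp
  · rw [Pi.mulSingle_eq_of_ne hi]
    funext j'
    by_contra h
    exact hi (hblock i j' h).1

lemma zValued_extendS {Z : Subgroup P} {S St : ℕ → Fin s → P} (hS : ZValued Z S)
    (hSt : ZValued Z St) (c : ℕ) : ZValued Z (extendS S c St) := by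
  intro i j
  unfold extendS
  split_ifs
  exacts [hS i j, hSt _ j]

end Turbo

open Turbo in
theorem recursive_iff_general {P : Type} [Group P] (Z : Subgroup P)
    {m k s n : ℕ}
    (𝒞 : ((Fin m → P) × (Fin k → P) × (Fin s → P)) →* ((Fin n → P) × (Fin m → P))) :
    Recursive Z ⇑𝒞 ↔
      ∀ M ∈ Iset Z ⇑𝒞, ∀ L : Fin k → P, wt L = 1 → ∀ S : Fin s → P,
        (∀ j, S j ∈ Z) → (𝒞 (M, L, S)).2 ∈ M1 Z ⇑𝒞 := by
  constructor
  · rintro hrec _ ⟨N, S₀, hS₀, rfl⟩ L hL S hS S' hS'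
    -- feed `𝒞_∞` the stabilizers `S₀` up to block `N`, then `S`, then `S'`
    set St := extendS (Function.update S₀ N S) (N + 1) S'
    have hZ : ZValued Z St :=
      zValued_extendS (fun i j => by
        rw [Function.update_apply]; split_ifs
        exacts [hS j, hS₀ i j]) hS' _
    have hinf := (infOutput_mulSingle_iff _ 1 N L St).mp
      (hrec _ St (oneInfoLetter_mulSingle N hL) hZ)
    have hbefore : convMem (⇑𝒞) 1 1 St N = convMem (⇑𝒞) 1 1 S₀ N :=
      convMem_congr _ 1 N (fun _ _ => rfl) fun j hj => by
        simp [St, extendS, Function.update_of_ne hj.ne, show j < N + 1 by omega]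
    have hat : St N = S := by simp [St, extendS]
    have hafter : (fun j => St (N + 1 + j)) = S' := funext fun j => by
      simp [St, extendS, show ¬ N + 1 + j < N + 1 by omega]
    rwa [hbefore, hat, hafter] at hinf
  · intro h L S hL hS
    obtain ⟨N, hLN, hwt⟩ := hL.exists_eq_mulSingle
    rw [hLN, infOutput_mulSingle_iff]
    exact h _ ⟨N, S, hS, rfl⟩ _ hwt _ (hS N) _ fun i => hS _

open Turbo in
/-- `𝒞` is recursive iff for every `M ∈ 𝕀`, every information block `L` of weight `1`, and
every `S ∈ Z^s`, the memory component of `𝒞(M, L, S)` belongs to `M₁`. -/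
theorem recursive_iff {P : Type} [Group P] [Finite P] (Z : Subgroup P) (hZ : Z ≠ ⊤)
    {m k s n : ℕ}
    (𝒞 : ((Fin m → P) × (Fin k → P) × (Fin s → P)) →* ((Fin n → P) × (Fin m → P))) :
    Recursive Z ⇑𝒞 ↔
      ∀ M ∈ Iset Z ⇑𝒞, ∀ L : Fin k → P, wt L = 1 → ∀ S : Fin s → P,
        (∀ j, S j ∈ Z) → (𝒞 (M, L, S)).2 ∈ M1 Z ⇑𝒞 :=
  recursive_iff_general Z 𝒞
end

section
/- Let P be a group of errors, 𝒞 a recursive [[n,k,s,m]] morphism with speed η, and E = (M, L₁, S₁, …, L_N, S_N) an input to 𝒞_N with every S_i ∈ Z^s, information weight w_L ≥ 1 and output weight d = |𝒞_N(E)|. Let v₁ < … < v_c be the starting indices of the detours of the trace of E, with v_{c+1} = w_L + 1, and for 1 ≤ i ≤ c set δp^{(i)} = p_{v_{i+1}−1} − p_{v_i}. Then Σ_{i=1}^{c} δp^{(i)} ≤ min(kN, ηk(w_L + d)). -/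
open scoped BigOperators

set_option linter.unusedSectionVars false
namespace TurboAux

/-- block containing position `p t` (0-indexed). -/
def eB (k : ℕ) (p : ℕ → ℕ) (t : ℕ) : ℕ := (p t - 1) / k

/-- first block of the `tch` stretch. -/
def sB (k : ℕ) (p : ℕ → ℕ) : ℕ → ℕ
  | 0 => 0
  | t + 1 => eB k p t + 1

lemma nat_tele (f : ℕ → ℕ) (a : ℕ) : ∀ b, a ≤ b →
    f b - f a ≤ ∑ t ∈ Finset.Ico a b, (f (t + 1) - f t) := by
  intro b
  induction b with
  | zero =>
      intro h
      have ha : a = 0 := by omega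
      subst ha
      simp
  | succ b ih =>
      intro h
      rcases Nat.eq_or_lt_of_le h with h' | h'
      · subst h'
        simp
      · have hab : a ≤ b := by omega
        rw [Finset.sum_Ico_succ_top hab]
        have := ih hab
        omega

end TurboAux

set_option linter.unusedSectionVars false
namespace TurboAux
open Turbo

variable {P : Type} [Group P] {m k s n : ℕ}

lemma convMem_congr (F : ((Fin m → P) × (Fin k → P) × (Fin s → P)) → ((Fin n → P) × (Fin m → P)))
    (M : Fin m → P) (L L' : ℕ → Fin k → P) (S S' : ℕ → Fin s → P) :
    ∀ N₀ : ℕ, (∀ i, i < N₀ → L i = L' i) → (∀ i, i < N₀ → S i = S' i) →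
      convMem F M L S N₀ = convMem F M L' S' N₀
  | 0, _, _ => rfl
  | N₀ + 1, hL, hS => by
      simp only [convMem]
      rw [convMem_congr F M L L' S S' N₀ (fun i hi => hL i (by omega))
        (fun i hi => hS i (by omega)), hL N₀ (by omega), hS N₀ (by omega)]

lemma convOut_congr (F : ((Fin m → P) × (Fin k → P) × (Fin s → P)) → ((Fin n → P) × (Fin m → P)))
    (M : Fin m → P) (L L' : ℕ → Fin k → P) (S S' : ℕ → Fin s → P) (i : ℕ)
    (hL : ∀ b, b ≤ i → L b = L' b) (hS : ∀ b, b ≤ i → S b = S' b) :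
    convOut F M L S i = convOut F M L' S' i := by
  unfold convOut
  rw [convMem_congr F M L L' S S' i (fun b hb => hL b (by omega)) (fun b hb => hS b (by omega)),
    hL i le_rfl, hS i le_rfl]

lemma convMem_add (F : ((Fin m → P) × (Fin k → P) × (Fin s → P)) → ((Fin n → P) × (Fin m → P)))
    (M : Fin m → P) (L : ℕ → Fin k → P) (S : ℕ → Fin s → P) (a : ℕ) :
    ∀ i : ℕ, convMem F M L S (a + i)
      = convMem F (convMem F M L S a) (fun b => L (a + b)) (fun b => S (a + b)) i
  | 0 => rfl
  | i + 1 => by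
      show convMem F M L S ((a + i) + 1) = _
      simp only [convMem]
      rw [convMem_add F M L S a i]

lemma convOut_add (F : ((Fin m → P) × (Fin k → P) × (Fin s → P)) → ((Fin n → P) × (Fin m → P)))
    (M : Fin m → P) (L : ℕ → Fin k → P) (S : ℕ → Fin s → P) (a i : ℕ) :
    convOut F M L S (a + i)
      = convOut F (convMem F M L S a) (fun b => L (a + b)) (fun b => S (a + b)) i := by
  unfold convOut
  rw [convMem_add]

lemma one_shift (a : ℕ) : (fun b => (1 : ℕ → Fin k → P) (a + b)) = (1 : ℕ → Fin k → P) := rfl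

lemma M1_step (Z : Subgroup P)
    (F : ((Fin m → P) × (Fin k → P) × (Fin s → P)) → ((Fin n → P) × (Fin m → P)))
    (M : Fin m → P) (hM : M ∈ M1 Z F) (S : ℕ → Fin s → P) (hS : ZValued Z S) (j : ℕ) :
    convMem F M 1 S j ∈ M1 Z F := by
  intro T hT
  have hS'' : ZValued Z (extendS S j T) := by
    intro i b
    unfold extendS
    split
    · exact hS i b
    · exact hT _ b
  have hinf : InfOutput F M 1 (extendS S j T) := hM _ hS''
  have key : ∀ i, convOut F (convMem F M 1 S j) 1 T i = convOut F M 1 (extendS S j T) (j + i) := by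
    intro i
    rw [convOut_add, one_shift]
    have h1 : convMem F M 1 (extendS S j T) j = convMem F M 1 S j := by
      refine convMem_congr F M 1 1 _ _ j (fun b hb => rfl) (fun b hb => ?_)
      unfold extendS; rw [if_pos hb]
    rw [h1]
    refine (convOut_congr F _ 1 1 _ T i (fun b hb => rfl) (fun b hb => ?_)).symm
    unfold extendS
    rw [if_neg (by omega), Nat.add_sub_cancel_left]
  have hinf2 : ({i : ℕ | convOut F M 1 (extendS S j T) i ≠ 1} \ Set.Iio j).Infinite :=
    hinf.diff (Set.finite_Iio j)
  have himg : ((fun i => i - j) '' ({i : ℕ | convOut F M 1 (extendS S j T) i ≠ 1} \ Set.Iio j)).Infinite := by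
    refine hinf2.image ?_
    intro x hx y hy hxy
    have hx' : j ≤ x := by simpa using hx.2
    have hy' : j ≤ y := by simpa using hy.2
    have hxy' : x - j = y - j := hxy
    omega
  refine himg.mono ?_
  rintro x ⟨i, ⟨hi, hij⟩, rfl⟩
  have hij' : j ≤ i := by simpa using hij
  show convOut F (convMem F M 1 S j) 1 T (i - j) ≠ 1
  rw [key, Nat.add_sub_cancel' hij']
  exact hi

lemma windows (Z : Subgroup P)
    (F : ((Fin m → P) × (Fin k → P) × (Fin s → P)) → ((Fin n → P) × (Fin m → P)))
    (η : ℕ) (hη : IsSpeed Z F η) :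
    ∀ (q : ℕ) (M : Fin m → P), M ∈ M1 Z F → ∀ S : ℕ → Fin s → P, ZValued Z S →
      q ≤ ∑ i ∈ Finset.range (q * η), wt (convOut F M 1 S i)
  | 0, _, _, _, _ => Nat.zero_le _
  | q + 1, M, hM, S, hS => by
      have hsplit : ∑ i ∈ Finset.range (η + q * η), wt (convOut F M 1 S i)
          = ∑ i ∈ Finset.range η, wt (convOut F M 1 S i)
            + ∑ i ∈ Finset.range (q * η), wt (convOut F M 1 S (η + i)) :=
        Finset.sum_range_add _ _ _
      have h1 : 1 ≤ ∑ i ∈ Finset.range η, wt (convOut F M 1 S i) := hη.1.2 M hM S hS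
      have h2 : ∀ i, convOut F M 1 S (η + i)
          = convOut F (convMem F M 1 S η) 1 (fun b => S (η + b)) i := by
        intro i; rw [convOut_add, one_shift]
      have h3 : q ≤ ∑ i ∈ Finset.range (q * η), wt (convOut F M 1 S (η + i)) := by
        have := windows Z F η hη q (convMem F M 1 S η)
          (M1_step Z F M hM S hS η) (fun b => S (η + b)) (fun i j => hS (η + i) j)
        calc q ≤ _ := this
        _ = _ := by
            refine Finset.sum_congr rfl fun i _ => ?_
            rw [h2]
      have hq : (q + 1) * η = η + q * η := by ring
      rw [hq, hsplit]
      omega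

lemma gap_core (Z : Subgroup P)
    (F : ((Fin m → P) × (Fin k → P) × (Fin s → P)) → ((Fin n → P) × (Fin m → P)))
    (η : ℕ) (hη : IsSpeed Z F η)
    (M₀ : Fin m → P) (Lp : ℕ → Fin k → P) (Sp : ℕ → Fin s → P) (hSp : ZValued Z Sp)
    (a b : ℕ) (hab : a ≤ b)
    (hMem : convMem F M₀ Lp Sp a ∈ M1 Z F)
    (hid : ∀ B, a ≤ B → B < b → Lp B = 1) :
    b + 1 - a ≤ η * ((∑ i ∈ Finset.Ico a b, wt (convOut F M₀ Lp Sp i)) + 1) := by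
  have hη0 : 0 < η := hη.1.1
  set D := b - a with hD
  set q := D / η with hq
  have h1 : ∀ i, i < D → wt (convOut F M₀ Lp Sp (a + i))
      = wt (convOut F (convMem F M₀ Lp Sp a) 1 (fun x => Sp (a + x)) i) := by
    intro i hi
    rw [convOut_add]
    congr 1
    refine convOut_congr F _ _ 1 _ _ i (fun x hx => hid (a + x) (by omega) (by omega))
      (fun x hx => rfl)
  have h2 : q ≤ ∑ i ∈ Finset.range (q * η),
      wt (convOut F (convMem F M₀ Lp Sp a) 1 (fun x => Sp (a + x)) i) :=
    windows Z F η hη q _ hMem _ (fun i j => hSp (a + i) j)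
  have h3 : ∑ i ∈ Finset.Ico a b, wt (convOut F M₀ Lp Sp i)
      = ∑ i ∈ Finset.range D, wt (convOut F M₀ Lp Sp (a + i)) := by
    rw [Finset.sum_Ico_eq_sum_range]
  have hqD : q * η ≤ D := Nat.div_mul_le_self D η
  have h4 : ∑ i ∈ Finset.range (q * η), wt (convOut F M₀ Lp Sp (a + i))
      ≤ ∑ i ∈ Finset.range D, wt (convOut F M₀ Lp Sp (a + i)) :=
    Finset.sum_le_sum_of_subset (Finset.range_subset_range.2 hqD)
  have h5 : ∑ i ∈ Finset.range (q * η), wt (convOut F M₀ Lp Sp (a + i))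
      = ∑ i ∈ Finset.range (q * η),
          wt (convOut F (convMem F M₀ Lp Sp a) 1 (fun x => Sp (a + x)) i) :=
    Finset.sum_congr rfl fun i hi => h1 i (by have := Finset.mem_range.1 hi; omega)
  have hqW : q ≤ ∑ i ∈ Finset.Ico a b, wt (convOut F M₀ Lp Sp i) := by
    rw [h3]; omega
  -- D < (q+1) * η
  have hdm : η * q + D % η = D := Nat.div_add_mod D η
  have hmod : D % η < η := Nat.mod_lt _ hη0
  set W := ∑ i ∈ Finset.Ico a b, wt (convOut F M₀ Lp Sp i) with hW
  have hmul : η * q ≤ η * W := Nat.mul_le_mul_left η hqW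
  have hgoal : η * (W + 1) = η * W + η := by ring
  omega

end TurboAux

open TurboAux in
open Turbo in
/-- The total spread of the detours is bounded: `Σ δp⁽ⁱ⁾ ≤ min(kN, ηk(w_L + d))`. -/
theorem detour_spread_bound {P : Type} [Group P] [Finite P] (Z : Subgroup P) (hZ : Z ≠ ⊤)
    {m k s n : ℕ}
    (𝒞 : ((Fin m → P) × (Fin k → P) × (Fin s → P)) →* ((Fin n → P) × (Fin m → P)))
    (hrec : Recursive Z ⇑𝒞) (η : ℕ) (hη : IsSpeed Z ⇑𝒞 η)
    (N : ℕ) (M : Fin m → P) (L : Fin N → Fin k → P) (S : Fin N → Fin s → P)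
    (hS : ∀ i j, S i j ∈ Z)
    (wL : ℕ) (hwL : 1 ≤ wL) (p : ℕ → ℕ)
    (hmono : ∀ i j, i < j → j < wL → p i < p j)
    (hrange : ∀ q, IsInfoPos N (pad L) q ↔ ∃ i < wL, p i = q)
    (c : ℕ) (hc : 1 ≤ c) (v : ℕ → ℕ)
    (hv1 : v 1 = 0 ∨ v 1 = 1)
    (hvmono : ∀ i, 1 ≤ i → i ≤ c → v i < v (i + 1))
    (hvc : v c ≤ wL)
    (hvend : v (c + 1) = wL + 1)
    (hterm : ∀ i, 1 ≤ i → i < c →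
      IsTermDetour (fun t => traceMem ⇑𝒞 M (pad L) (pad S) p t ∈ M1 Z ⇑𝒞) (v i) (v (i + 1)))
    (hlast : IsDetour (fun t => traceMem ⇑𝒞 M (pad L) (pad S) p t ∈ M1 Z ⇑𝒞) (v c) (wL + 1)) :
    ∑ i ∈ Finset.Icc 1 c, (pp p (v (i + 1) - 1) - pp p (v i)) ≤
      min (k * N) (η * k * (wL + fullWt ⇑𝒞 M (pad L) (pad S) N)) := by
  classical
  have hη0 : 0 < η := hη.1.1
  -- basic position facts
  have hposall : ∀ t, t < wL → 1 ≤ p t ∧ p t ≤ k * N ∧ 0 < k ∧ 0 < N := by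
    intro t ht
    obtain ⟨i, j, hiN, hq, -⟩ := (hrange (p t)).2 ⟨t, ht, rfl⟩
    have hk : 0 < k := lt_of_le_of_lt (Nat.zero_le _) j.isLt
    have h1 : 1 ≤ p t := by rw [hq]; omega
    have h2 : p t ≤ k * N := by
      have hj1 : (j : ℕ) + 1 ≤ k := j.isLt
      have : i * k + ((j : ℕ) + 1) ≤ i * k + k := Nat.add_le_add_left hj1 _
      have h3 : i * k + k = (i + 1) * k := by ring
      have h4 : (i + 1) * k ≤ N * k := Nat.mul_le_mul_right k hiN
      have h5 : N * k = k * N := mul_comm _ _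
      omega
    exact ⟨h1, h2, hk, lt_of_le_of_lt (Nat.zero_le _) hiN⟩
  have hk : 0 < k := (hposall 0 hwL).2.2.1
  have hN0 : 0 < N := (hposall 0 hwL).2.2.2
  have hpos : ∀ t, t < wL → 1 ≤ p t := fun t ht => (hposall t ht).1
  have hple : ∀ t, t < wL → p t ≤ k * N := fun t ht => (hposall t ht).2.1
  have hmonoLe : ∀ u t, u ≤ t → t < wL → p u ≤ p t := by
    intro u t hut ht
    rcases Nat.eq_or_lt_of_le hut with h | h
    · rw [h]
    · exact le_of_lt (hmono u t h ht)
  -- sB * k dominates pp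
  have hppk : ∀ t, t ≤ wL → pp p t ≤ sB k p t * k := by
    intro t ht
    cases t with
    | zero => exact Nat.zero_le _
    | succ t' =>
        show p t' ≤ (eB k p t' + 1) * k
        have h1 : (p t' - 1) / k < eB k p t' + 1 := by unfold eB; omega
        have h2 : p t' - 1 < (eB k p t' + 1) * k := (Nat.div_lt_iff_lt_mul hk).1 h1
        have h3 : 1 ≤ p t' := hpos t' (by omega)
        omega
  -- positions inside block B with B < eB t are < p t
  have hUpper : ∀ t, t < wL → ∀ (B : ℕ) (j : Fin k), B < eB k p t → B * k + (j : ℕ) + 1 < p t := by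
    intro t ht B j hB
    have hj1 : (j : ℕ) + 1 ≤ k := j.isLt
    have h1 : B * k + ((j : ℕ) + 1) ≤ B * k + k := Nat.add_le_add_left hj1 _
    have h2 : B * k + k = (B + 1) * k := by ring
    have h3 : (B + 1) * k ≤ eB k p t * k := Nat.mul_le_mul_right k hB
    have h4 : eB k p t * k ≤ p t - 1 := Nat.div_mul_le_self _ _
    have h5 : 1 ≤ p t := hpos t ht
    omega
  -- no information letter strictly between consecutive positions
  have noInfo : ∀ t, t < wL → ∀ (i : ℕ) (j : Fin k),
      pp p t < i * k + (j : ℕ) + 1 → i * k + (j : ℕ) + 1 < p t → pad L i j = 1 := by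
    intro t ht i j h1 h2
    by_cases hiN : i < N
    · by_contra hne
      obtain ⟨u, hu, hpu⟩ := (hrange (i * k + (j : ℕ) + 1)).1 ⟨i, j, hiN, rfl, hne⟩
      rcases le_or_gt t u with h | h
      · have := hmonoLe t u h hu
        omega
      · cases t with
        | zero => omega
        | succ t' =>
            have : p u ≤ p t' := hmonoLe u t' (by omega) (by omega)
            have hpp : pp p (t' + 1) = p t' := rfl
            omega
    · show pad L i j = 1
      unfold Turbo.pad
      rw [dif_neg hiN]
      rfl
  -- blocks strictly inside a stretch carry no information
  have hBlockId : ∀ t, t < wL → ∀ B, sB k p t ≤ B → B < eB k p t → pad L B = 1 := by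
    intro t ht B hsB hBe
    funext j
    refine noInfo t ht B j ?_ (hUpper t ht B j hBe)
    have h1 : pp p t ≤ sB k p t * k := hppk t (by omega)
    have h2 : sB k p t * k ≤ B * k := Nat.mul_le_mul_right k hsB
    omega
  -- trace memory is the actual memory at the start of the stretch
  have hMemEq : ∀ t, t < wL → sB k p t ≤ eB k p t →
      traceMem (⇑𝒞) M (pad L) (pad S) p t = convMem (⇑𝒞) M (pad L) (pad S) (sB k p t) := by
    intro t ht hse
    cases t with
    | zero => rfl
    | succ t' =>
        show convMem (⇑𝒞) M (truncAfter (pad L) (p t')) (pad S) ((p t' - 1) / k + 1)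
            = convMem (⇑𝒞) M (pad L) (pad S) (eB k p t' + 1)
        refine convMem_congr _ _ _ _ _ _ _ (fun B hB => ?_) (fun B hB => rfl)
        funext j
        show (if B * k + (j : ℕ) + 1 ≤ p t' then pad L B j else 1) = pad L B j
        by_cases hcase : B * k + (j : ℕ) + 1 ≤ p t'
        · rw [if_pos hcase]
        · rw [if_neg hcase]
          refine (noInfo (t' + 1) ht B j ?_ ?_).symm
          · show p t' < B * k + (j : ℕ) + 1
            omega
          · refine hUpper (t' + 1) ht B j ?_
            show B < eB k p (t' + 1)
            have : B < sB k p (t' + 1) := hB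
            omega
  -- stabilizers are Z-valued
  have hSpZ : ZValued Z (pad S) := by
    intro i j
    unfold Turbo.pad
    split
    · exact hS _ j
    · exact Z.one_mem
  -- the gap bound
  have hGap : ∀ t, t < wL → traceMem (⇑𝒞) M (pad L) (pad S) p t ∈ M1 Z (⇑𝒞) →
      eB k p t + 1 - sB k p t
        ≤ η * ((∑ i ∈ Finset.Ico (sB k p t) (eB k p t),
            wt (convOut (⇑𝒞) M (pad L) (pad S) i)) + 1) := by
    intro t ht hbit
    by_cases hse : sB k p t ≤ eB k p t
    · have := gap_core Z (⇑𝒞) η hη M (pad L) (pad S) hSpZ (sB k p t) (eB k p t) hse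
        (by rw [← hMemEq t ht hse]; exact hbit) (hBlockId t ht)
      exact this
    · have : eB k p t + 1 - sB k p t = 0 := by omega
      rw [this]
      exact Nat.zero_le _
  -- monotonicity of v on [1, c+1]
  have vmono' : ∀ a b, 1 ≤ a → a ≤ b → b ≤ c + 1 → v a ≤ v b := by
    intro a b ha hab hbc
    induction b with
    | zero => omega
    | succ b ih =>
        rcases Nat.eq_or_lt_of_le hab with h | h
        · rw [h]
        · have h1 : v a ≤ v b := ih (by omega) (by omega)
          have h2 : v b < v (b + 1) := hvmono b (by omega) (by omega)
          omega
  -- all gap indices inside detours have trace bit 1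
  have hbit : ∀ i, 1 ≤ i → i ≤ c → ∀ t, v i ≤ t → t < v (i + 1) - 1 →
      traceMem (⇑𝒞) M (pad L) (pad S) p t ∈ M1 Z (⇑𝒞) := by
    intro i h1i hic t ht1 ht2
    have hvlt : v i < v (i + 1) := hvmono i h1i hic
    rcases Nat.eq_or_lt_of_le hic with h | h
    · subst h
      rcases hlast with ⟨-, hmid⟩ | ⟨-, hmid, -⟩
      · exact hmid t ht1 (by omega)
      · exact hmid t ht1 (by omega)
    · obtain ⟨-, hmid, -⟩ := hterm i h1i h
      exact hmid t ht1 (by omega)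
  -- upper bounds on v
  have hvub : ∀ i, 1 ≤ i → i ≤ c → v (i + 1) ≤ wL + 1 := by
    intro i h1i hic
    have := vmono' (i + 1) (c + 1) (by omega) (by omega) le_rfl
    omega
  -- monotonicity of sB
  have hsBmono : ∀ a b, a ≤ b → b ≤ wL → sB k p a ≤ sB k p b := by
    intro a b hab hbw
    cases a with
    | zero => exact Nat.zero_le _
    | succ a' =>
        cases b with
        | zero => omega
        | succ b' =>
            show eB k p a' + 1 ≤ eB k p b' + 1
            have : p a' ≤ p b' := hmonoLe a' b' (by omega) (by omega)
            have : (p a' - 1) / k ≤ (p b' - 1) / k := Nat.div_le_div_right (by omega)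
            unfold eB
            omega
  -- the per-detour bound
  have hDet : ∀ i, 1 ≤ i → i ≤ c →
      pp p (v (i + 1) - 1) - pp p (v i)
        ≤ k * (∑ t ∈ Finset.Ico (v i) (v (i + 1) - 1), (eB k p t + 1 - sB k p t))
          + (if v i = 0 then 0 else k - 1) := by
    intro i h1i hic
    have hvlt : v i < v (i + 1) := hvmono i h1i hic
    have hvub' : v (i + 1) ≤ wL + 1 := hvub i h1i hic
    by_cases hba : v (i + 1) - 1 = v i
    · rw [hba, Nat.sub_self]
      exact Nat.zero_le _
    · have hab : v i < v (i + 1) - 1 := by omega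
      have hbw : v (i + 1) - 1 ≤ wL := by omega
      have hTel : sB k p (v (i + 1) - 1) - sB k p (v i)
          ≤ ∑ t ∈ Finset.Ico (v i) (v (i + 1) - 1), (eB k p t + 1 - sB k p t) := by
        have h := nat_tele (sB k p) (v i) (v (i + 1) - 1) (le_of_lt hab)
        have heq : ∀ t, sB k p (t + 1) - sB k p t = eB k p t + 1 - sB k p t := fun t => rfl
        calc sB k p (v (i + 1) - 1) - sB k p (v i)
            ≤ ∑ t ∈ Finset.Ico (v i) (v (i + 1) - 1), (sB k p (t + 1) - sB k p t) := h
          _ = _ := Finset.sum_congr rfl fun t _ => heq t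
      have hup : pp p (v (i + 1) - 1) ≤ sB k p (v (i + 1) - 1) * k := hppk _ (by omega)
      have hsm : sB k p (v i) ≤ sB k p (v (i + 1) - 1) := hsBmono _ _ (by omega) hbw
      set Sc := ∑ t ∈ Finset.Ico (v i) (v (i + 1) - 1), (eB k p t + 1 - sB k p t) with hSc
      cases hvi0 : v i with
      | zero =>
          rw [hvi0] at hTel hsm
          rw [if_pos rfl]
          have h0 : sB k p 0 = 0 := rfl
          have hpp0 : pp p 0 = 0 := rfl
          have h1 : sB k p (v (i + 1) - 1) ≤ Sc := by omega
          have h2 : sB k p (v (i + 1) - 1) * k ≤ Sc * k := Nat.mul_le_mul_right k h1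
          have h3 : Sc * k = k * Sc := mul_comm _ _
          omega
      | succ a' =>
          rw [hvi0] at hTel hsm
          rw [if_neg (by omega)]
          have hppa : pp p (a' + 1) = p a' := rfl
          have ha'w : a' < wL := by omega
          have hlow : eB k p a' * k + 1 ≤ p a' := by
            have h1 : eB k p a' * k ≤ p a' - 1 := Nat.div_mul_le_self _ _
            have h2 : 1 ≤ p a' := hpos a' ha'w
            omega
          have hsa : sB k p (a' + 1) = eB k p a' + 1 := rfl
          set X := sB k p (v (i + 1) - 1) - sB k p (a' + 1) with hX
          have hXS : X ≤ Sc := by omega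
          have hXk : X * k ≤ Sc * k := Nat.mul_le_mul_right k hXS
          have hcomm : Sc * k = k * Sc := mul_comm _ _
          have hseq : sB k p (v (i + 1) - 1) = eB k p a' + 1 + X := by omega
          rw [hseq] at hup
          have hf1 : pp p (v (i + 1) - 1) ≤ eB k p a' * k + k + X * k := by
            have : (eB k p a' + 1 + X) * k = eB k p a' * k + k + X * k := by ring
            omega
          omega
  -- combine detour bound with gap bound
  have hDet2 : ∀ i, 1 ≤ i → i ≤ c →
      pp p (v (i + 1) - 1) - pp p (v i)
        ≤ k * (η * (∑ t ∈ Finset.Ico (v i) (v (i + 1) - 1),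
            ((∑ x ∈ Finset.Ico (sB k p t) (eB k p t),
              wt (convOut (⇑𝒞) M (pad L) (pad S) x)) + 1)))
          + (if v i = 0 then 0 else k - 1) := by
    intro i h1i hic
    refine le_trans (hDet i h1i hic) ?_
    have hsum : (∑ t ∈ Finset.Ico (v i) (v (i + 1) - 1), (eB k p t + 1 - sB k p t))
        ≤ ∑ t ∈ Finset.Ico (v i) (v (i + 1) - 1),
            (η * ((∑ x ∈ Finset.Ico (sB k p t) (eB k p t),
              wt (convOut (⇑𝒞) M (pad L) (pad S) x)) + 1)) := by
      refine Finset.sum_le_sum fun t htm => ?_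
      have htIco := Finset.mem_Ico.1 htm
      have htw : t < wL := by
        have := hvub i h1i hic
        omega
      exact hGap t htw (hbit i h1i hic t htIco.1 htIco.2)
    have h2 : k * (∑ t ∈ Finset.Ico (v i) (v (i + 1) - 1), (eB k p t + 1 - sB k p t))
        ≤ k * (∑ t ∈ Finset.Ico (v i) (v (i + 1) - 1),
            (η * ((∑ x ∈ Finset.Ico (sB k p t) (eB k p t),
              wt (convOut (⇑𝒞) M (pad L) (pad S) x)) + 1))) := Nat.mul_le_mul_left k hsum
    rw [← Finset.mul_sum] at h2
    omega
  -- notation for weights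
  set d := fullWt (⇑𝒞) M (pad L) (pad S) N with hd
  -- sum of the detour bounds
  have hsum1 : ∑ i ∈ Finset.Icc 1 c, (pp p (v (i + 1) - 1) - pp p (v i))
      ≤ k * η * (∑ i ∈ Finset.Icc 1 c, ∑ t ∈ Finset.Ico (v i) (v (i + 1) - 1),
            ((∑ x ∈ Finset.Ico (sB k p t) (eB k p t),
              wt (convOut (⇑𝒞) M (pad L) (pad S) x)) + 1))
        + ∑ i ∈ Finset.Icc 1 c, (if v i = 0 then 0 else k - 1) := by
    calc ∑ i ∈ Finset.Icc 1 c, (pp p (v (i + 1) - 1) - pp p (v i))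
        ≤ ∑ i ∈ Finset.Icc 1 c,
            (k * (η * (∑ t ∈ Finset.Ico (v i) (v (i + 1) - 1),
              ((∑ x ∈ Finset.Ico (sB k p t) (eB k p t),
                wt (convOut (⇑𝒞) M (pad L) (pad S) x)) + 1)))
              + (if v i = 0 then 0 else k - 1)) := by
          refine Finset.sum_le_sum fun i hi => ?_
          have hi' := Finset.mem_Icc.1 hi
          exact hDet2 i hi'.1 hi'.2
      _ = _ := by
          rw [Finset.sum_add_distrib, ← Finset.mul_sum, ← Finset.mul_sum, ← mul_assoc]
  -- split the inner sums
  have hsplit : ∑ i ∈ Finset.Icc 1 c, ∑ t ∈ Finset.Ico (v i) (v (i + 1) - 1),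
        ((∑ x ∈ Finset.Ico (sB k p t) (eB k p t),
          wt (convOut (⇑𝒞) M (pad L) (pad S) x)) + 1)
      = (∑ i ∈ Finset.Icc 1 c, ∑ t ∈ Finset.Ico (v i) (v (i + 1) - 1),
          ∑ x ∈ Finset.Ico (sB k p t) (eB k p t),
            wt (convOut (⇑𝒞) M (pad L) (pad S) x))
        + ∑ i ∈ Finset.Icc 1 c, ((v (i + 1) - 1) - v i) := by
    rw [← Finset.sum_add_distrib]
    refine Finset.sum_congr rfl fun i hi => ?_
    rw [Finset.sum_add_distrib]
    congr 1
    rw [Finset.sum_const, Nat.card_Ico, smul_eq_mul, mul_one]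
  -- the detour index sets are pairwise disjoint
  have hdisjD : (↑(Finset.Icc 1 c) : Set ℕ).PairwiseDisjoint
      (fun i => Finset.Ico (v i) (v (i + 1) - 1)) := by
    intro i hi j hj hij
    simp only [Finset.coe_Icc, Set.mem_Icc] at hi hj
    have key : ∀ i j, 1 ≤ i → i ≤ c → 1 ≤ j → j ≤ c → i < j →
        Disjoint (Finset.Ico (v i) (v (i + 1) - 1)) (Finset.Ico (v j) (v (j + 1) - 1)) := by
      intro i j h1 h2 h3 h4 h5
      rw [Finset.disjoint_left]
      intro x hx hx'
      have hx1 := (Finset.mem_Ico.1 hx).2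
      have hx2 := (Finset.mem_Ico.1 hx').1
      have : v (i + 1) ≤ v j := vmono' (i + 1) j (by omega) (by omega) (by omega)
      omega
    rcases lt_or_gt_of_ne hij with h | h
    · exact key i j hi.1 hi.2 hj.1 hj.2 h
    · exact (key j i hj.1 hj.2 hi.1 hi.2 h).symm
  -- elements of the detours are < wL
  set T := (Finset.Icc 1 c).biUnion (fun i => Finset.Ico (v i) (v (i + 1) - 1)) with hT
  have hTsub : ∀ t ∈ T, t < wL := by
    intro t ht
    obtain ⟨i, hi, hti⟩ := Finset.mem_biUnion.1 ht
    have hi' := Finset.mem_Icc.1 hi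
    have := hvub i hi'.1 hi'.2
    have := (Finset.mem_Ico.1 hti).2
    omega
  -- the stretch block intervals are pairwise disjoint
  have heBmono : ∀ a b, a ≤ b → b < wL → eB k p a ≤ eB k p b := by
    intro a b hab hbw
    exact Nat.div_le_div_right (by have := hmonoLe a b hab hbw; omega)
  have hdisjB : (↑T : Set ℕ).PairwiseDisjoint
      (fun t => Finset.Ico (sB k p t) (eB k p t)) := by
    intro t ht t' ht' htt
    have htw : t < wL := hTsub t (by exact_mod_cast ht)
    have htw' : t' < wL := hTsub t' (by exact_mod_cast ht')
    have key : ∀ a b, a < b → b < wL →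
        Disjoint (Finset.Ico (sB k p a) (eB k p a)) (Finset.Ico (sB k p b) (eB k p b)) := by
      intro a b hab hbw
      rw [Finset.disjoint_left]
      intro x hx hx'
      have hx1 := (Finset.mem_Ico.1 hx).2
      have hx2 := (Finset.mem_Ico.1 hx').1
      obtain ⟨b', rfl⟩ : ∃ b', b = b' + 1 := ⟨b - 1, by omega⟩
      have hsb : sB k p (b' + 1) = eB k p b' + 1 := rfl
      have : eB k p a ≤ eB k p b' := heBmono a b' (by omega) (by omega)
      omega
    rcases lt_or_gt_of_ne htt with h | h
    · exact key t t' h htw'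
    · exact (key t' t h htw).symm
  -- total stretch weight is at most the output weight
  have hSW : (∑ i ∈ Finset.Icc 1 c, ∑ t ∈ Finset.Ico (v i) (v (i + 1) - 1),
        ∑ x ∈ Finset.Ico (sB k p t) (eB k p t),
          wt (convOut (⇑𝒞) M (pad L) (pad S) x)) ≤ d := by
    rw [← Finset.sum_biUnion hdisjD, ← hT, ← Finset.sum_biUnion hdisjB]
    have hsub : T.biUnion (fun t => Finset.Ico (sB k p t) (eB k p t)) ⊆ Finset.range N := by
      intro x hx
      obtain ⟨t, ht, hxt⟩ := Finset.mem_biUnion.1 hx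
      have htw : t < wL := hTsub t ht
      have hx2 := (Finset.mem_Ico.1 hxt).2
      have heN : eB k p t < N := by
        refine (Nat.div_lt_iff_lt_mul hk).2 ?_
        have h1 : p t ≤ k * N := hple t htw
        have h2 : 1 ≤ p t := hpos t htw
        have h3 : k * N = N * k := mul_comm _ _
        omega
      exact Finset.mem_range.2 (by omega)
    calc ∑ x ∈ T.biUnion (fun t => Finset.Ico (sB k p t) (eB k p t)),
          wt (convOut (⇑𝒞) M (pad L) (pad S) x)
        ≤ ∑ x ∈ Finset.range N, wt (convOut (⇑𝒞) M (pad L) (pad S) x) :=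
          Finset.sum_le_sum_of_subset hsub
      _ = outWt (⇑𝒞) M (pad L) (pad S) N := rfl
      _ ≤ d := Nat.le_add_right _ _
  -- the number of gaps
  have hg : (∑ i ∈ Finset.Icc 1 c, ((v (i + 1) - 1) - v i)) + c + v 1 = wL + 1 := by
    have key : ∀ j, j ≤ c →
        (∑ i ∈ Finset.Icc 1 j, ((v (i + 1) - 1) - v i)) + j + v 1 = v (j + 1) := by
      intro j
      induction j with
      | zero => intro _; simp
      | succ j ih =>
          intro hj
          rw [Finset.sum_Icc_succ_top (by omega)]
          have h1 := ih (by omega)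
          have h2 : v (j + 1) < v (j + 1 + 1) := hvmono (j + 1) (by omega) (by omega)
          omega
    have := key c le_rfl
    omega
  -- Part 2 : the speed bound
  have part2 : ∑ i ∈ Finset.Icc 1 c, (pp p (v (i + 1) - 1) - pp p (v i))
      ≤ η * k * (wL + d) := by
    set A := ∑ i ∈ Finset.Icc 1 c, ∑ t ∈ Finset.Ico (v i) (v (i + 1) - 1),
        ∑ x ∈ Finset.Ico (sB k p t) (eB k p t),
          wt (convOut (⇑𝒞) M (pad L) (pad S) x) with hA
    set g := ∑ i ∈ Finset.Icc 1 c, ((v (i + 1) - 1) - v i) with hgdef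
    have hmain : ∑ i ∈ Finset.Icc 1 c, (pp p (v (i + 1) - 1) - pp p (v i))
        ≤ k * η * (A + g) + ∑ i ∈ Finset.Icc 1 c, (if v i = 0 then 0 else k - 1) := by
      have := hsum1
      rw [hsplit] at this
      exact this
    have hAd : A ≤ d := hSW
    have hkηA : k * η * A ≤ k * η * d := Nat.mul_le_mul_left _ hAd
    have hdist : k * η * (A + g) = k * η * A + k * η * g := by ring
    rcases hv1 with hv10 | hv11
    · -- v 1 = 0 : first detour starts at the memory bit
      have hpay : (∑ i ∈ Finset.Icc 1 c, (if v i = 0 then 0 else k - 1))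
          ≤ (c - 1) * (k - 1) := by
        have h1 : Finset.Icc 1 c = insert 1 (Finset.Icc 2 c) := by
          ext x
          simp only [Finset.mem_Icc, Finset.mem_insert]
          omega
        rw [h1, Finset.sum_insert (by simp)]
        rw [if_pos hv10]
        have h2 : (∑ i ∈ Finset.Icc 2 c, (if v i = 0 then 0 else k - 1))
            ≤ ∑ i ∈ Finset.Icc 2 c, (k - 1) :=
          Finset.sum_le_sum fun i _ => by split <;> omega
        rw [Finset.sum_const, Nat.card_Icc, smul_eq_mul] at h2
        have : c + 1 - 2 = c - 1 := by omega
        rw [this] at h2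
        omega
      have hgc : g + c = wL + 1 := by rw [hv10] at hg; omega
      obtain ⟨c', rfl⟩ : ∃ c', c = c' + 1 := ⟨c - 1, by omega⟩
      have hwLeq : wL = g + c' := by omega
      have hfin : k * η * g + (c' + 1 - 1) * (k - 1) ≤ η * k * wL := by
        have h3 : c' + 1 - 1 = c' := by omega
        rw [h3, hwLeq]
        have h4 : η * k * (g + c') = k * η * g + k * η * c' := by ring
        have h5 : c' * (k - 1) ≤ k * η * c' := by
          calc c' * (k - 1) ≤ c' * k := Nat.mul_le_mul_left _ (by omega)
            _ = k * c' := mul_comm _ _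
            _ ≤ k * η * c' := by
                have : k * 1 ≤ k * η := Nat.mul_le_mul_left _ hη0
                calc k * c' = (k * 1) * c' := by ring
                  _ ≤ (k * η) * c' := Nat.mul_le_mul_right _ this
        omega
      have h6 : η * k * (wL + d) = η * k * wL + η * k * d := by ring
      have h7 : k * η * d = η * k * d := by ring
      omega
    · -- v 1 = 1
      have hpay : (∑ i ∈ Finset.Icc 1 c, (if v i = 0 then 0 else k - 1))
          ≤ c * (k - 1) := by
        have h2 : (∑ i ∈ Finset.Icc 1 c, (if v i = 0 then 0 else k - 1))
            ≤ ∑ i ∈ Finset.Icc 1 c, (k - 1) :=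
          Finset.sum_le_sum fun i _ => by split <;> omega
        rw [Finset.sum_const, Nat.card_Icc, smul_eq_mul] at h2
        have : c + 1 - 1 = c := by omega
        rw [this] at h2
        exact h2
      have hgc : g + c = wL := by rw [hv11] at hg; omega
      have hfin : k * η * g + c * (k - 1) ≤ η * k * wL := by
        rw [← hgc]
        have h4 : η * k * (g + c) = k * η * g + k * η * c := by ring
        have h5 : c * (k - 1) ≤ k * η * c := by
          calc c * (k - 1) ≤ c * k := Nat.mul_le_mul_left _ (by omega)
            _ = k * c := mul_comm _ _
            _ ≤ k * η * c := by
                have : k * 1 ≤ k * η := Nat.mul_le_mul_left _ hη0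
                calc k * c = (k * 1) * c := by ring
                  _ ≤ (k * η) * c := Nat.mul_le_mul_right _ this
        omega
      have h6 : η * k * (wL + d) = η * k * wL + η * k * d := by ring
      have h7 : k * η * d = η * k * d := by ring
      omega
  -- Part 1 : the trivial bound
  have hppmono : ∀ a b, a ≤ b → b ≤ wL → pp p a ≤ pp p b := by
    intro a b hab hbw
    cases a with
    | zero => exact Nat.zero_le _
    | succ a' =>
        cases b with
        | zero => omega
        | succ b' =>
            show p a' ≤ p b'
            exact hmonoLe a' b' (by omega) (by omega)
  have part1 : ∑ i ∈ Finset.Icc 1 c, (pp p (v (i + 1) - 1) - pp p (v i)) ≤ k * N := by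
    have key : ∀ j, j ≤ c →
        (∑ i ∈ Finset.Icc 1 j, (pp p (v (i + 1) - 1) - pp p (v i))) ≤ pp p (v (j + 1) - 1) := by
      intro j
      induction j with
      | zero => intro _; simp
      | succ j ih =>
          intro hj
          rw [Finset.sum_Icc_succ_top (by omega)]
          have h1 := ih (by omega)
          have hvj1 : v (j + 1) ≤ wL := by
            have := vmono' (j + 1) c (by omega) (by omega) (by omega)
            omega
          have hvj2 : v (j + 1 + 1) ≤ wL + 1 := hvub (j + 1) (by omega) (by omega)
          have hlt : v (j + 1) < v (j + 1 + 1) := hvmono (j + 1) (by omega) (by omega)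
          have h2 : pp p (v (j + 1) - 1) ≤ pp p (v (j + 1)) :=
            hppmono _ _ (by omega) hvj1
          have h3 : pp p (v (j + 1)) ≤ pp p (v (j + 1 + 1) - 1) :=
            hppmono _ _ (by omega) (by omega)
          omega
    have h := key c le_rfl
    have hend : v (c + 1) - 1 = wL := by omega
    rw [hend] at h
    obtain ⟨wL', rfl⟩ : ∃ w', wL = w' + 1 := ⟨wL - 1, by omega⟩
    have : pp p (wL' + 1) = p wL' := rfl
    have := hple wL' (by omega)
    omega
  exact le_min part1 part2
end

section
/- Let P be a group of errors and C an [[n,k]] encoder with distance d_c and degenerate distance d_q ≥ 2. Then a^{⊗N}(d) = 0 whenever 0 < d < d_c, and there exists a constant K > 0, depending only on C, such that for every N ≥ 1 and every d ≥ d_c: a^{⊗N}(d) ≤ K^d · (N/d)^{(d−d_c)/d_q + 1}. -/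
open scoped BigOperators

/-!
An input counted by `a^{⊗N}(d)` is determined by its nonidentity blocks. One of them carries
information, so its image weighs at least `d_c`, and the image of every other one is
undetected, so it weighs at least `d_q`: there are at most `t = ⌊(d - d_c) / d_q⌋ + 1` of them.
Choosing at most `t` pairs (position, block) among `N c`, where `c` is the number of blocks,
gives `a^{⊗N}(d) ≤ (t + 1) (N c)^t / t!`, and `(N c)^t / t! = c^t (d^t / t!) (N / d)^t` with
`d^t / t! ≤ e^d`. Finally `N / d ≥ 1 / c`, since a block weighs at most `n < c`, and the real
exponent lies in `[t, t + 1]`, so `(N / d)^t ≤ c (N / d)^((d - d_c) / d_q + 1)`.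
-/

namespace Turbo

open Finset

section Weight

variable {P : Type} [Group P]

theorem wt_one {n : ℕ} : wt (1 : Fin n → P) = 0 := by
  simp [wt]

theorem wt_le {n : ℕ} (E : Fin n → P) : wt E ≤ n := by
  simpa [wt, Set.ncard_univ] using Set.ncard_le_ncard (Set.subset_univ {i | E i ≠ 1})

end Weight

theorem card_filter_card_support_le {ι β : Type*} [Fintype ι] [DecidableEq ι] [Fintype β]
    [DecidableEq β] [One β] (t : ℕ) :
    #{f : ι → β | #{i | f i ≠ 1} ≤ t} ≤
      ∑ s ∈ range (t + 1), (Fintype.card ι * Fintype.card β).choose s := by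
  let graph (f : ι → β) : Finset (ι × β) := ({i | f i ≠ 1} : Finset ι).image fun i => (i, f i)
  have mem_graph (f : ι → β) (i : ι) (b : β) : (i, b) ∈ graph f ↔ f i ≠ 1 ∧ f i = b := by
    simp only [graph, mem_image, mem_filter, mem_univ, true_and, Prod.mk.injEq]
    constructor
    · rintro ⟨j, hj, rfl, rfl⟩
      exact ⟨hj, rfl⟩
    · rintro ⟨hi, rfl⟩
      exact ⟨i, hi, rfl, rfl⟩
  have card_graph (f : ι → β) : #(graph f) = #{i | f i ≠ 1} :=
    card_image_of_injective _ fun _ _ h => (Prod.ext_iff.mp h).1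
  have graph_injective : Function.Injective graph := by
    intro f g hfg
    funext i
    by_cases hf : f i = 1
    · by_cases hg : g i = 1
      · rw [hf, hg]
      · have hi : (i, g i) ∈ graph f := hfg ▸ (mem_graph g i (g i)).2 ⟨hg, rfl⟩
        exact ((mem_graph f i (g i)).1 hi).2
    · have hi : (i, f i) ∈ graph g := hfg ▸ (mem_graph f i (f i)).2 ⟨hf, rfl⟩
      exact ((mem_graph g i (f i)).1 hi).2.symm
  calc #{f : ι → β | #{i | f i ≠ 1} ≤ t}
      ≤ #{T : Finset (ι × β) | #T ≤ t} :=
        card_le_card_of_injOn graph (fun f hf => by simpa [card_graph] using hf)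
          graph_injective.injOn
    _ ≤ #((range (t + 1)).biUnion fun s => powersetCard s univ) :=
        card_le_card fun T hT => by simp at hT ⊢; omega
    _ ≤ ∑ s ∈ range (t + 1), #(powersetCard s (univ : Finset (ι × β))) := card_biUnion_le
    _ = ∑ s ∈ range (t + 1), (Fintype.card ι * Fintype.card β).choose s := by
        simp

theorem choose_mul_factorial_le_pow {M s t : ℕ} (hst : s ≤ t) (htM : t ≤ M) :
    M.choose s * t.factorial ≤ M ^ t := by
  induction t, hst using Nat.le_induction with
  | base =>
    rw [mul_comm, ← Nat.descFactorial_eq_factorial_mul_choose]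
    exact Nat.descFactorial_le_pow M s
  | succ t hst ih =>
    calc M.choose s * (t + 1).factorial = (t + 1) * (M.choose s * t.factorial) := by
          rw [Nat.factorial_succ]; ring
      _ ≤ M * M ^ t := Nat.mul_le_mul htM (ih (by omega))
      _ = M ^ (t + 1) := by ring

theorem sum_range_choose_le {M t : ℕ} (htM : t ≤ M) :
    (∑ s ∈ range (t + 1), M.choose s : ℝ) ≤ (t + 1) * M ^ t / t.factorial := by
  rw [le_div_iff₀ (by positivity), sum_mul]
  calc ∑ s ∈ range (t + 1), (M.choose s : ℝ) * t.factorial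
      ≤ ∑ _s ∈ range (t + 1), (M : ℝ) ^ t :=
        sum_le_sum fun s hs => by
          exact_mod_cast choose_mul_factorial_le_pow (Nat.lt_succ_iff.mp (mem_range.mp hs)) htM
    _ = (t + 1) * M ^ t := by simp

theorem div_lt_natCast_div_add_one (a b : ℕ) : (a : ℝ) / b < (a / b : ℕ) + 1 := by
  simpa [Nat.floor_div_eq_div] using Nat.lt_floor_add_one ((a : ℝ) / b)

theorem pow_le_mul_rpow {x b e : ℝ} {t : ℕ} (hx : 0 < x) (hb : 1 ≤ b) (hbx : 1 ≤ b * x)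
    (hte : t ≤ e) (het : e ≤ t + 1) : x ^ t ≤ b * x ^ e := by
  rcases le_or_gt 1 x with hx1 | hx1
  · rw [← Real.rpow_natCast]
    exact (Real.rpow_le_rpow_of_exponent_le hx1 hte).trans
      (le_mul_of_one_le_left (by positivity) hb)
  · calc x ^ t ≤ x ^ t * (b * x) := le_mul_of_one_le_right (by positivity) hbx
      _ = b * x ^ ((t + 1 : ℕ) : ℝ) := by rw [Real.rpow_natCast]; ring
      _ ≤ b * x ^ e := mul_le_mul_of_nonneg_left
          (Real.rpow_le_rpow_of_exponent_ge hx hx1.le (by push_cast; exact het)) (by positivity)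

theorem succ_mul_pow_div_factorial_le {N d c t : ℕ} {e : ℝ} (hd : 1 ≤ d) (htd : t ≤ d)
    (hdN : d ≤ N * c) (hte : t ≤ e) (het : e ≤ t + 1) :
    (t + 1) * ((N * c : ℕ) : ℝ) ^ t / t.factorial ≤
      (2 * c ^ 2 * Real.exp 1) ^ d * ((N : ℝ) / d) ^ e := by
  have hc : (1 : ℝ) ≤ c := by exact_mod_cast Nat.pos_of_ne_zero (by rintro rfl; omega)
  have hd0 : (0 : ℝ) < d := by exact_mod_cast hd
  have hN : (0 : ℝ) < N := by exact_mod_cast Nat.pos_of_ne_zero (by rintro rfl; omega)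
  have hx : (0 : ℝ) < N / d := div_pos hN hd0
  have hcx : 1 ≤ (c : ℝ) * (N / d) := by
    rw [mul_div_assoc', le_div_iff₀ hd0, one_mul, mul_comm]
    exact_mod_cast hdN
  calc (t + 1) * ((N * c : ℕ) : ℝ) ^ t / t.factorial
      = (t + 1) * c ^ t * (d ^ t / t.factorial) * (N / d) ^ t := by
        rw [div_pow, Nat.cast_mul]
        field_simp
        ring
    _ ≤ 2 ^ d * c ^ d * Real.exp 1 ^ d * (c * (N / d) ^ e) := by
        gcongr
        · exact_mod_cast (Nat.lt_two_pow_self.trans_le (Nat.pow_le_pow_right two_pos htd))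
        · rw [Real.exp_one_pow]
          exact Real.pow_div_factorial_le_exp _ hd0.le t
        · exact pow_le_mul_rpow hx hc hcx hte het
    _ ≤ 2 ^ d * c ^ d * Real.exp 1 ^ d * (c ^ d * (N / d) ^ e) := by
        gcongr
        exact le_self_pow₀ hc (by omega)
    _ = (2 * c ^ 2 * Real.exp 1) ^ d * ((N : ℝ) / d) ^ e := by ring

theorem lt_card_block {P : Type} [Fintype P] [Nontrivial P] {k n : ℕ} :
    n < Fintype.card ((Fin k → P) × (Fin (n - k) → P)) :=
  calc n < 2 ^ n := Nat.lt_two_pow_self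
    _ ≤ 2 ^ (k + (n - k)) := Nat.pow_le_pow_right two_pos (by omega)
    _ = 2 ^ k * 2 ^ (n - k) := pow_add _ _ _
    _ ≤ Fintype.card P ^ k * Fintype.card P ^ (n - k) := by
        gcongr <;> exact Fintype.one_lt_card
    _ = Fintype.card ((Fin k → P) × (Fin (n - k) → P)) := by simp

section BlockEncoder

variable {P : Type} [Group P] (Z : Subgroup P) {k n : ℕ}
  (C : ((Fin k → P) × (Fin (n - k) → P)) ≃* (Fin n → P))

theorem undetected_apply {L : Fin k → P} {S : Fin (n - k) → P} (hS : ∀ j, S j ∈ Z)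
    (hLS : (L, S) ≠ 1) : Undetected Z C (C (L, S)) :=
  ⟨(map_ne_one_iff C C.injective).2 hLS, by simpa using hS⟩

theorem harmful_apply {L : Fin k → P} {S : Fin (n - k) → P} (hS : ∀ j, S j ∈ Z) (hL : L ≠ 1) :
    Harmful Z C (C (L, S)) :=
  ⟨undetected_apply Z C hS fun h => hL (Prod.mk_eq_one.mp h).1, by simpa using hL⟩

theorem encDegenDist_le_wt_apply {L : Fin k → P} {S : Fin (n - k) → P} (hS : ∀ j, S j ∈ Z)
    (hLS : (L, S) ≠ 1) : encDegenDist Z C ≤ wt (C (L, S)) :=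
  Nat.sInf_le ⟨_, undetected_apply Z C hS hLS, rfl⟩

theorem encDist_le_wt_apply {L : Fin k → P} {S : Fin (n - k) → P} (hS : ∀ j, S j ∈ Z)
    (hL : L ≠ 1) : encDist Z C ≤ wt (C (L, S)) :=
  Nat.sInf_le ⟨_, harmful_apply Z C hS hL, rfl⟩

variable {N : ℕ} {L : Fin N → Fin k → P} {S : Fin N → Fin (n - k) → P}

theorem encDist_add_mul_encDegenDist_le_sum_wt [DecidableEq P] (hS : ∀ i j, S i j ∈ Z)
    (hL : L ≠ 1) :
    encDist Z C + (#{i | (L i, S i) ≠ 1} - 1) * encDegenDist Z C ≤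
      ∑ i, wt (C (L i, S i)) := by
  set T : Finset (Fin N) := {i | (L i, S i) ≠ 1}
  obtain ⟨i₀, hi₀⟩ := Function.ne_iff.mp hL
  have hi₀T : i₀ ∈ T := by simpa [T] using fun h _ => hi₀ h
  have sum_eq : ∑ i ∈ T, wt (C (L i, S i)) = ∑ i, wt (C (L i, S i)) :=
    sum_subset (subset_univ T) fun i _ hi => by
      simp only [T, mem_filter, mem_univ, true_and, not_not] at hi
      rw [hi, map_one, wt_one]
  have rest : (#T - 1) * encDegenDist Z C ≤ ∑ i ∈ T.erase i₀, wt (C (L i, S i)) := by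
    rw [← card_erase_of_mem hi₀T, ← smul_eq_mul]
    exact card_nsmul_le_sum _ _ _ fun i hi =>
      encDegenDist_le_wt_apply Z C (hS i) (mem_filter.mp (mem_of_mem_erase hi)).2
  rw [← sum_eq, ← add_sum_erase T _ hi₀T]
  exact add_le_add (encDist_le_wt_apply Z C (hS i₀) hi₀) rest

theorem encDegenDist_le_sum_wt (hS : ∀ i j, S i j ∈ Z) (hL : L ≠ 1) :
    encDegenDist Z C ≤ ∑ i, wt (C (L i, S i)) := by
  obtain ⟨i, hi⟩ := Function.ne_iff.mp hL
  exact (encDegenDist_le_wt_apply Z C (hS i) fun h => hi (Prod.mk_eq_one.mp h).1).trans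
    (single_le_sum (f := fun i => wt (C (L i, S i))) (fun _ _ => Nat.zero_le _) (mem_univ i))

theorem sum_wt_le_mul : ∑ i, wt (C (L i, S i)) ≤ N * n :=
  (sum_le_sum fun i _ => wt_le _).trans (by simp)

variable {Z C}

theorem aTensor_eq_zero_of_lt_encDist {d : ℕ} (hd : d < encDist Z C) :
    aTensor Z C N d = 0 := by
  by_contra ha
  obtain ⟨⟨L, S⟩, hS, hL, rfl⟩ := Set.nonempty_of_ncard_ne_zero ha
  classical
  have := encDist_add_mul_encDegenDist_le_sum_wt Z C hS hL
  omega

theorem encDegenDist_le_of_aTensor_ne_zero {d : ℕ} (ha : aTensor Z C N d ≠ 0) :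
    encDegenDist Z C ≤ d := by
  obtain ⟨⟨L, S⟩, hS, hL, rfl⟩ := Set.nonempty_of_ncard_ne_zero ha
  exact encDegenDist_le_sum_wt Z C hS hL

theorem le_mul_card_of_aTensor_ne_zero [Fintype P] {d : ℕ} (ha : aTensor Z C N d ≠ 0) :
    d ≤ N * Fintype.card ((Fin k → P) × (Fin (n - k) → P)) := by
  obtain ⟨⟨L, S⟩, -, hL, rfl⟩ := Set.nonempty_of_ncard_ne_zero ha
  obtain ⟨i, j, hij⟩ : ∃ i j, L i j ≠ 1 := by simpa [funext_iff] using hL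
  have : Nontrivial P := ⟨_, _, hij⟩
  exact (sum_wt_le_mul C).trans (Nat.mul_le_mul_left N lt_card_block.le)

theorem aTensor_le_card_filter_card_support_le [Fintype P] [DecidableEq P] {d : ℕ}
    (hdq : 0 < encDegenDist Z C) :
    aTensor Z C N d ≤ #{f : Fin N → (Fin k → P) × (Fin (n - k) → P) |
      #{i | f i ≠ 1} ≤ (d - encDist Z C) / encDegenDist Z C + 1} := by
  rw [aTensor, ← Set.ncard_coe_finset]
  refine Set.ncard_le_ncard_of_injOn (Equiv.arrowProdEquivProdArrow _ _ _).symm ?_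
    (Equiv.injective _).injOn (Set.toFinite _)
  rintro ⟨L, S⟩ ⟨hS, hL, rfl⟩
  dsimp only at hS hL ⊢
  have := encDist_add_mul_encDegenDist_le_sum_wt Z C hS hL
  have : #{i | (L i, S i) ≠ 1} - 1 ≤
      (∑ i, wt (C (L i, S i)) - encDist Z C) / encDegenDist Z C :=
    (Nat.le_div_iff_mul_le hdq).mpr (by omega)
  rw [coe_filter]
  refine ⟨mem_univ _, ?_⟩
  change #{i | (L i, S i) ≠ 1} ≤ _
  omega

theorem aTensor_le_sum_choose [Fintype P] {d : ℕ} (hdq : 0 < encDegenDist Z C) :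
    aTensor Z C N d ≤ ∑ s ∈ range ((d - encDist Z C) / encDegenDist Z C + 1 + 1),
      (N * Fintype.card ((Fin k → P) × (Fin (n - k) → P))).choose s := by
  classical
  simpa using (aTensor_le_card_filter_card_support_le hdq).trans
    (card_filter_card_support_le (ι := Fin N) _)

end BlockEncoder

end Turbo

open Turbo in
theorem bound_1E_general {P : Type} [Group P] [Finite P] (Z : Subgroup P)
    {k n : ℕ}
    (C : ((Fin k → P) × (Fin (n - k) → P)) ≃* (Fin n → P))
    (hdq : 2 ≤ encDegenDist Z C) :
    (∀ N d : ℕ, 0 < d → d < encDist Z C → aTensor Z C N d = 0) ∧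
    ∃ K : ℝ, 0 < K ∧ ∀ N : ℕ, 1 ≤ N → ∀ d : ℕ, encDist Z C ≤ d →
      (aTensor Z C N d : ℝ) ≤
        K ^ d * ((N : ℝ) / (d : ℝ)) ^
          (((d : ℝ) - (encDist Z C : ℝ)) / (encDegenDist Z C : ℝ) + 1) := by
  have := Fintype.ofFinite P
  set c := Fintype.card ((Fin k → P) × (Fin (n - k) → P))
  refine ⟨fun N d _ hd => aTensor_eq_zero_of_lt_encDist hd,
    2 * c ^ 2 * Real.exp 1, by positivity, ?_⟩
  intro N _ d hd
  by_cases ha : aTensor Z C N d = 0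
  · rw [ha, Nat.cast_zero]
    positivity
  set t := (d - encDist Z C) / encDegenDist Z C + 1
  have hd2 : 2 ≤ d := hdq.trans (encDegenDist_le_of_aTensor_ne_zero ha)
  have htd : t ≤ d := by
    have : (d - encDist Z C) / encDegenDist Z C ≤ (d - encDist Z C) / 2 :=
      Nat.div_le_div_left hdq two_pos
    omega
  have hdN : d ≤ N * c := le_mul_card_of_aTensor_ne_zero ha
  set x : ℝ := ((d - encDist Z C : ℕ) : ℝ) / encDegenDist Z C
  have hte : (t : ℝ) ≤ x + 1 := by
    push_cast [t]
    gcongr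
    exact Nat.cast_div_le
  have het : x + 1 ≤ t + 1 := by
    push_cast [t]
    linarith [div_lt_natCast_div_add_one (d - encDist Z C) (encDegenDist Z C)]
  rw [← Nat.cast_sub hd]
  calc (aTensor Z C N d : ℝ)
      ≤ ∑ s ∈ Finset.range (t + 1), ((N * c).choose s : ℝ) := by
        exact_mod_cast aTensor_le_sum_choose (by omega)
    _ ≤ (t + 1) * ((N * c : ℕ) : ℝ) ^ t / t.factorial :=
        sum_range_choose_le (htd.trans hdN)
    _ ≤ _ := succ_mul_pow_div_factorial_le (by omega) htd hdN hte het

open Turbo in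
/-- Bound 1E: weight distribution of the blockwise outer encoder. -/
theorem bound_1E {P : Type} [Group P] [Finite P] (Z : Subgroup P) (hZ : Z ≠ ⊤)
    {k n : ℕ} (hkn : k ≤ n)
    (C : ((Fin k → P) × (Fin (n - k) → P)) ≃* (Fin n → P))
    (hdq : 2 ≤ encDegenDist Z C) :
    (∀ N d : ℕ, 0 < d → d < encDist Z C → aTensor Z C N d = 0) ∧
    ∃ K : ℝ, 0 < K ∧ ∀ N : ℕ, 1 ≤ N → ∀ d : ℕ, encDist Z C ≤ d →
      (aTensor Z C N d : ℝ) ≤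
        K ^ d * ((N : ℝ) / (d : ℝ)) ^
          (((d : ℝ) - (encDist Z C : ℝ)) / (encDegenDist Z C : ℝ) + 1) :=
  bound_1E_general Z C hdq
end
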